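/- arXiv:1612.04085 — 4 statements merged into one kernel-verified Lean document; each statement's English description precedes it below -/
import Mathlib

section
/- Let m, n, d ≥ 1 be integers and let P be an m×n complex matrix polynomial of grade d with first companion form C¹_P. Then, taking closures in the metric space of (m+n(d−1)) × nd matrix pencils, closure(Orb^e(C¹_P) ∩ GSYL) = closure(Orb^e(C¹_P)) ∩ GSYL. -/
open Matrix Finset

namespace MPoly

/-- The space `POL_{d,m×n}` of `m × n` complex matrix polynomials of grade `d`,
identified with the tuple of coefficients `(A_0, …, A_d)`. -/
abbrev Pol (d m n : ℕ) := Fin (d+1) → Matrix (Fin m) (Fin n) ℂ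

/-- A matrix pencil `λ A + B` of size `p × q`, identified with the pair `(A, B)`. -/
abbrev Pencil (p q : ℕ) := Matrix (Fin p) (Fin q) ℂ × Matrix (Fin p) (Fin q) ℂ

/-- The metric on `POL_{d,m×n}`:  `dist(P,P') = (Σ_i ‖A_i − A'_i‖_F²)^(1/2)`. -/
noncomputable def polDist {m n d : ℕ} (P P' : Pol d m n) : ℝ :=
  Real.sqrt (∑ k, ∑ i, ∑ j, ‖P k i j - P' k i j‖ ^ 2)

/-- The Frobenius norm of a matrix polynomial: `‖P‖_F = (Σ_i ‖A_i‖_F²)^(1/2)`. -/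
noncomputable def polNorm {m n d : ℕ} (P : Pol d m n) : ℝ :=
  Real.sqrt (∑ k, ∑ i, ∑ j, ‖P k i j‖ ^ 2)

/-- The metric on pencils: `dist(λA+B, λA'+B') = (‖A−A'‖_F² + ‖B−B'‖_F²)^(1/2)`. -/
noncomputable def penDist {p q : ℕ} (L L' : Pencil p q) : ℝ :=
  Real.sqrt ((∑ i, ∑ j, ‖L.1 i j - L'.1 i j‖ ^ 2) + (∑ i, ∑ j, ‖L.2 i j - L'.2 i j‖ ^ 2))

/-- The `λ`-part `A = diag(A_d, I_n, …, I_n)` of the first companion form. -/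
noncomputable def compA (m n d : ℕ) (P : Pol d m n) :
    Matrix (Fin (m + n*(d-1))) (Fin (n*d)) ℂ := fun i j =>
  if hi : (i : ℕ) < m then
    if hj : (j : ℕ) < n then P (Fin.last d) ⟨i, hi⟩ ⟨j, hj⟩ else 0
  else if (i : ℕ) - m = (j : ℕ) - n ∧ n ≤ (j : ℕ) then 1 else 0

/-- The constant part `B` of the first companion form: first block row
`(A_{d-1}, …, A_0)`, with `−I_n` in block entries `(i+1, i)`. -/
noncomputable def compB (m n d : ℕ) (P : Pol d m n) :
    Matrix (Fin (m + n*(d-1))) (Fin (n*d)) ℂ := fun i j =>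
  if hi : (i : ℕ) < m then
    if hn : 0 < n then
      P ⟨d - 1 - (j : ℕ) / n, Nat.lt_succ_of_le ((Nat.sub_le _ _).trans (Nat.sub_le d 1))⟩ ⟨i, hi⟩ ⟨(j : ℕ) % n, Nat.mod_lt _ hn⟩
    else 0
  else if (j : ℕ) = (i : ℕ) - m then -1 else 0

/-- The first Frobenius companion form `C¹_P` of a matrix polynomial. -/
noncomputable def comp (m n d : ℕ) (P : Pol d m n) : Pencil (m + n*(d-1)) (n*d) :=
  (compA m n d P, compB m n d P)

/-- Strict equivalence of matrix pencils: `Q⁻¹ (λA+B) R = λC+D` for invertible `Q, R`. -/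
def StrictEquiv {p q : ℕ} (L M : Pencil p q) : Prop :=
  ∃ (Q : Matrix (Fin p) (Fin p) ℂ) (R : Matrix (Fin q) (Fin q) ℂ),
    IsUnit Q ∧ IsUnit R ∧ Q⁻¹ * L.1 * R = M.1 ∧ Q⁻¹ * L.2 * R = M.2

/-- The strict equivalence orbit of a pencil. -/
def orbE {p q : ℕ} (L : Pencil p q) : Set (Pencil p q) := {M | StrictEquiv L M}

/-- The generalized Sylvester space `GSYL¹_{d,m×n}` of all first companion forms. -/
def GSYL (m n d : ℕ) : Set (Pencil (m + n*(d-1)) (n*d)) := Set.range (comp m n d)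

/-- A matrix polynomial viewed as a matrix over the field `ℂ(λ)` of rational functions. -/
noncomputable def ratMatrix {m n d : ℕ} (P : Pol d m n) :
    Matrix (Fin m) (Fin n) (RatFunc ℂ) :=
  fun i j => ∑ k : Fin (d+1), RatFunc.C (P k i j) * RatFunc.X ^ (k : ℕ)

/-- The normal rank of a matrix polynomial: its rank over `ℂ(λ)`. -/
noncomputable def nrank {m n d : ℕ} (P : Pol d m n) : ℕ := (ratMatrix P).rank

/-- Offset of the `b`-th diagonal block when block `j` has size `sz j`. -/
def off (sz : ℕ → ℕ) (b : ℕ) : ℕ := ∑ j ∈ Finset.range b, sz j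

/-- The `p × q` matrix given as a direct sum of `N` diagonal blocks, where block `b`
has size `ρ b × γ b` and entries `ent b`, blocks being laid out along the diagonal
in order (block `b` occupies rows `[off ρ b, off ρ b + ρ b)` and columns
`[off γ b, off γ b + γ b)`); all other entries are zero. -/
noncomputable def dsum (N : ℕ) (ρ γ : ℕ → ℕ) (ent : ℕ → ℕ → ℕ → ℂ) (p q : ℕ) :
    Matrix (Fin p) (Fin q) ℂ := fun x y =>
  ∑ b ∈ Finset.range N,
    if off ρ b ≤ (x:ℕ) ∧ (x:ℕ) < off ρ b + ρ b ∧ off γ b ≤ (y:ℕ) ∧ (y:ℕ) < off γ b + γ b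
    then ent b ((x:ℕ) - off ρ b) ((y:ℕ) - off γ b) else 0

/-- Sizes of the four sections of blocks: `c₁` blocks of size `v₁`, then `c₂` of size
`v₂`, then `c₃` of size `v₃`, then the rest of size `v₄`. -/
def secSize (c₁ c₂ c₃ : ℕ) (v₁ v₂ v₃ v₄ : ℕ) (i : ℕ) : ℕ :=
  if i < c₁ then v₁ else if i < c₁ + c₂ then v₂ else if i < c₁ + c₂ + c₃ then v₃ else v₄

/-- The `p × q` pencil which is the direct sum of `c₁` copies of `L_{e₁}`, `c₂` copies
of `L_{e₂}`, `c₃` copies of `L_{f₁}ᵀ` and `c₄` copies of `L_{f₂}ᵀ`.  Here `L_k` is the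
`k × (k+1)` pencil `λ G_k + F_k` with `G_k` having ones in entries `(i,i)` and `F_k`
having ones in entries `(i,i+1)`. -/
noncomputable def genPencil (c₁ c₂ c₃ c₄ e₁ e₂ f₁ f₂ p q : ℕ) : Pencil p q :=
  (dsum (c₁+c₂+c₃+c₄) (secSize c₁ c₂ c₃ e₁ e₂ (f₁+1) (f₂+1))
     (secSize c₁ c₂ c₃ (e₁+1) (e₂+1) f₁ f₂)
     (fun _ i j => if i = j then 1 else 0) p q,
   dsum (c₁+c₂+c₃+c₄) (secSize c₁ c₂ c₃ e₁ e₂ (f₁+1) (f₂+1))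
     (secSize c₁ c₂ c₃ (e₁+1) (e₂+1) f₁ f₂)
     (fun b i j => if b < c₁ + c₂ then (if j = i+1 then 1 else 0)
       else (if i = j+1 then 1 else 0)) p q)

/-- The generic pencil `G_a` of Theorem 3.2 (viewed at grade `d`):  the direct sum of
`s` copies of `L_{α+d}`, `n−r−s` copies of `L_{α+d−1}`, `t` copies of `L_{β+1}ᵀ` and
`m−r−t` copies of `L_βᵀ`, where `α = ⌊a/(n−r)⌋`, `s = a mod (n−r)`,
`β = ⌊(rd−a)/(m−r)⌋`, `t = (rd−a) mod (m−r)`. -/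
noncomputable def Ga (m n d r a : ℕ) : Pencil (m + n*(d-1)) (n*d) :=
  genPencil (a % (n-r)) (n-r - a % (n-r)) ((r*d - a) % (m-r)) (m-r - (r*d - a) % (m-r))
    (a/(n-r) + d) (a/(n-r) + d - 1) ((r*d - a)/(m-r) + 1) ((r*d - a)/(m-r))
    (m + n*(d-1)) (n*d)


/-- The generic rank-`ρ` pencil of size `p × q` with parameter `b` (Theorem 3.2 of
De Terán–Dopico): direct sum of `s₁` copies of `L_{α₁+1}`, `q−ρ−s₁` copies of `L_{α₁}`,
`t₁` copies of `L_{β₁+1}ᵀ` and `p−ρ−t₁` copies of `L_{β₁}ᵀ`, where `α₁ = ⌊b/(q−ρ)⌋`,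
`s₁ = b mod (q−ρ)`, `β₁ = ⌊(ρ−b)/(p−ρ)⌋`, `t₁ = (ρ−b) mod (p−ρ)`. -/
noncomputable def Kp (p q ρ b : ℕ) : Pencil p q :=
  genPencil (b % (q-ρ)) (q-ρ - b % (q-ρ)) ((ρ-b) % (p-ρ)) (p-ρ - (ρ-b) % (p-ρ))
    (b/(q-ρ) + 1) (b/(q-ρ)) ((ρ-b)/(p-ρ) + 1) ((ρ-b)/(p-ρ)) p q

/-- The generic right-singular pencil `G_rp` (case `m < n`): direct sum of `s` copies of
`L_{α+d}` and `n−m−s` copies of `L_{α+d−1}`, with `α = ⌊md/(n−m)⌋`, `s = md mod (n−m)`. -/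
noncomputable def Grp (m n d : ℕ) : Pencil (m + n*(d-1)) (n*d) :=
  genPencil (m*d % (n-m)) (n-m - m*d % (n-m)) 0 0
    (m*d/(n-m) + d) (m*d/(n-m) + d - 1) 0 0 (m + n*(d-1)) (n*d)

/-- The generic left-singular pencil `G_ℓp` (case `m > n`): direct sum of `t` copies of
`L_{β+1}ᵀ` and `m−n−t` copies of `L_βᵀ`, with `β = ⌊nd/(m−n)⌋`, `t = nd mod (m−n)`. -/
noncomputable def Glp (m n d : ℕ) : Pencil (m + n*(d-1)) (n*d) :=
  genPencil 0 0 (n*d % (m-n)) (m-n - n*d % (m-n)) 0 0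
    (n*d/(m-n) + 1) (n*d/(m-n)) (m + n*(d-1)) (n*d)

/-- The linear map `(X, Y) ↦ (XA − AY, XB − BY)` whose range is the tangent space at
`λA+B` to the strict equivalence orbit of the pencil `λA+B`. -/
noncomputable def tangentMap {p q : ℕ} (L : Pencil p q) :
    (Matrix (Fin p) (Fin p) ℂ × Matrix (Fin q) (Fin q) ℂ) →ₗ[ℂ]
      (Matrix (Fin p) (Fin q) ℂ × Matrix (Fin p) (Fin q) ℂ) where
  toFun XY := (XY.1 * L.1 - L.1 * XY.2, XY.1 * L.2 - L.2 * XY.2)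
  map_add' X Y := by
    obtain ⟨X₁, X₂⟩ := X; obtain ⟨Y₁, Y₂⟩ := Y
    simp only [Prod.mk_add_mk, Matrix.add_mul, Matrix.mul_add, Prod.mk.injEq]
    constructor <;> abel
  map_smul' c X := by
    obtain ⟨X₁, X₂⟩ := X
    simp only [Prod.smul_mk, Matrix.smul_mul, Matrix.mul_smul, RingHom.id_apply,
      Prod.mk.injEq, smul_sub]

/-- The tangent space `T = {(XA − AY, XB − BY)}` at `λA+B` to its strict equivalence
orbit, as a subspace of the pencil space. -/
noncomputable def tangent {p q : ℕ} (L : Pencil p q) :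
    Submodule ℂ (Matrix (Fin p) (Fin q) ℂ × Matrix (Fin p) (Fin q) ℂ) :=
  LinearMap.range (tangentMap L)

/-- The first companion form `C¹_M(λ) = λ A + B` regarded as a matrix over `ℂ[λ]`. -/
noncomputable def compPoly (m n d : ℕ) (M : Pol d m n) :
    Matrix (Fin (m + n*(d-1))) (Fin (n*d)) (Polynomial ℂ) := fun i j =>
  Polynomial.C (compA m n d M i j) * Polynomial.X + Polynomial.C (compB m n d M i j)

/-- The block-diagonal matrix `diag(M(λ), I_{n(d−1)})` over `ℂ[λ]`. -/
noncomputable def polyBlock (m n d : ℕ) (M : Pol d m n) :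
    Matrix (Fin (m + n*(d-1))) (Fin (n*d)) (Polynomial ℂ) := fun i j =>
  if hi : (i : ℕ) < m then
    if hj : (j : ℕ) < n then
      ∑ k : Fin (d+1), Polynomial.C (M k ⟨i, hi⟩ ⟨j, hj⟩) * Polynomial.X ^ (k : ℕ)
    else 0
  else if (i : ℕ) - m = (j : ℕ) - n ∧ n ≤ (j : ℕ) then 1 else 0

/-- The first companion form regarded as a matrix over the field `ℂ(λ)`. -/
noncomputable def compRat (m n d : ℕ) (M : Pol d m n) :
    Matrix (Fin (m + n*(d-1))) (Fin (n*d)) (RatFunc ℂ) := fun i j =>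
  RatFunc.C (compA m n d M i j) * RatFunc.X + RatFunc.C (compB m n d M i j)


-- arithmetic helpers
lemma blk_lt {n r s d : ℕ} (hs : s < n) (hr : r < d) : n*r + s < n*d := by
  have h1 : n*r + s < n*(r+1) := by rw [Nat.mul_succ]; omega
  have h2 : n*(r+1) ≤ n*d := Nat.mul_le_mul_left n hr
  omega

lemma bnd1 {n d x : ℕ} (h : x < n*(d-1)) : n + x < n*d := by
  rcases d with _|dd
  · simp at h
  · simp only [Nat.add_sub_cancel] at h; rw [Nat.mul_succ]; omega

lemma bnd2 {n d x : ℕ} (h : x < n*d) (hx : n ≤ x) : x - n < n*(d-1) := by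
  rcases d with _|dd
  · simp at h
  · simp only [Nat.add_sub_cancel]; rw [Nat.mul_succ] at h; omega

lemma fac_pos {x y : ℕ} (h : 0 < x*y) : 0 < y :=
  Nat.pos_of_ne_zero (fun h0 => by subst h0; simp at h)

lemma fac_pos' {x y : ℕ} (h : 0 < x*y) : 0 < x :=
  Nat.pos_of_ne_zero (fun h0 => by subst h0; simp at h)

lemma div_shift {n j : ℕ} (hn : 0 < n) (h : n ≤ j) : (j-n)/n + 1 = j/n := by
  conv_rhs => rw [← Nat.sub_add_cancel h]
  rw [Nat.add_div_right _ hn]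

lemma mod_shift {n j : ℕ} (h : n ≤ j) : (j-n) % n = j % n := by
  conv_rhs => rw [← Nat.sub_add_cancel h]
  rw [Nat.add_mod_right]

variable {m n d : ℕ}

/-- block coefficient data -/
noncomputable def Cm (S T : Matrix (Fin (m + n*(d-1))) (Fin (n*d)) ℂ) (r c : ℕ) :
    Matrix (Fin n) (Fin n) ℂ := fun s t =>
  if h : 1 ≤ r ∧ r ≤ d-1 ∧ c ≤ d-1 then
    T ⟨m + (n*(r-1) + (s:ℕ)), by have := blk_lt s.2 (show r-1 < d-1 by omega); omega⟩
      ⟨n*c + (t:ℕ), by have := blk_lt t.2 (show c < d by omega); omega⟩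
    + (if 2 ≤ r then
        S ⟨m + (n*(r-2) + (s:ℕ)), by have := blk_lt s.2 (show r-2 < d-1 by omega); omega⟩
          ⟨n*c + (t:ℕ), by have := blk_lt t.2 (show c < d by omega); omega⟩ else 0)
  else 0

noncomputable def Wm (S T : Matrix (Fin (m + n*(d-1))) (Fin (n*d)) ℂ) (r c : ℕ) :
    Matrix (Fin n) (Fin n) ℂ :=
  if r < c then ∑ j ∈ Finset.range (d - c), Cm S T (r+1+j) (c+j)
  else -∑ j ∈ Finset.range c, Cm S T (r-c+1+j) j

lemma Wm_zero (S T : Matrix (Fin (m + n*(d-1))) (Fin (n*d)) ℂ) (r : ℕ) : Wm S T r 0 = 0 := by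
  simp [Wm]

lemma Wm_lt (S T : Matrix (Fin (m + n*(d-1))) (Fin (n*d)) ℂ) {r c : ℕ} (h : r < c) :
    Wm S T r c = ∑ j ∈ Finset.range (d - c), Cm S T (r+1+j) (c+j) := by
  rw [Wm, if_pos h]

lemma Wm_ge (S T : Matrix (Fin (m + n*(d-1))) (Fin (n*d)) ℂ) {r c : ℕ} (h : ¬ r < c) :
    Wm S T r c = -∑ j ∈ Finset.range c, Cm S T (r-c+1+j) j := by
  rw [Wm, if_neg h]

lemma key_rec (S T : Matrix (Fin (m + n*(d-1))) (Fin (n*d)) ℂ) {r c : ℕ}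
    (hr1 : 1 ≤ r) (hr2 : r ≤ d-1) (hc : c ≤ d-1) :
    (if c < d-1 then -(Wm S T r (c+1)) else 0) + Wm S T (r-1) c = Cm S T r c := by
  by_cases hrc : r ≤ c
  · rw [Wm_lt S T (show r - 1 < c by omega)]
    have hsum : ∑ j ∈ Finset.range (d - c), Cm S T (r-1+1+j) (c+j)
        = ∑ j ∈ Finset.range (d - c), Cm S T (r+j) (c+j) := by
      refine Finset.sum_congr rfl (fun j _ => ?_)
      rw [show r-1+1+j = r+j by omega]
    rw [hsum]
    by_cases h2 : c < d-1
    · rw [if_pos h2, Wm_lt S T (show r < c+1 by omega)]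
      rw [show d - c = (d - c - 1) + 1 by omega, Finset.sum_range_succ']
      have hsum2 : ∑ j ∈ Finset.range (d - c - 1), Cm S T (r+(j+1)) (c+(j+1))
          = ∑ j ∈ Finset.range (d - (c+1)), Cm S T (r+1+j) (c+1+j) := by
        rw [show d - (c+1) = d - c - 1 by omega]
        refine Finset.sum_congr rfl (fun j _ => ?_)
        rw [show r+(j+1) = r+1+j by omega, show c+(j+1) = c+1+j by omega]
      rw [hsum2]
      abel_nf
    · rw [if_neg h2]
      have hc' : c = d-1 := by omega
      subst hc'
      rw [show d - (d-1) = 1 by omega, Finset.sum_range_one, zero_add]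
      rw [show r + 0 = r by omega, show d-1+0 = d-1 by omega]
  · have h2 : c < d - 1 := by omega
    rw [if_pos h2, Wm_ge S T (show ¬ r < c+1 by omega), Wm_ge S T (show ¬ r-1 < c by omega)]
    have e1 : ∑ j ∈ Finset.range (c+1), Cm S T (r-(c+1)+1+j) j
        = ∑ j ∈ Finset.range (c+1), Cm S T (r-c+j) j := by
      refine Finset.sum_congr rfl (fun j _ => ?_)
      rw [show r-(c+1)+1+j = r-c+j by omega]
    have e2 : ∑ j ∈ Finset.range c, Cm S T (r-1-c+1+j) j
        = ∑ j ∈ Finset.range c, Cm S T (r-c+j) j := by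
      refine Finset.sum_congr rfl (fun j _ => ?_)
      rw [show r-1-c+1+j = r-c+j by omega]
    rw [e1, e2, Finset.sum_range_succ, show r-c+c = r by omega]
    abel


section Solver

variable {m n d : ℕ}

noncomputable def Xm (Q₀ : Pol d m n) (S T : Matrix (Fin (m + n*(d-1))) (Fin (n*d)) ℂ) :
    Matrix (Fin (m + n*(d-1))) (Fin (m + n*(d-1))) ℂ := fun i k =>
  if hi : (i:ℕ) < m then
    if hk : (k:ℕ) < m then 0
    else
      S i ⟨n + ((k:ℕ) - m), bnd1 (by have := k.2; omega)⟩
      + ∑ l : Fin (n*d), (if hl : (l:ℕ) < n then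
          Q₀ (Fin.last d) ⟨(i:ℕ), hi⟩ ⟨(l:ℕ), hl⟩ *
            Wm S T 0 (((k:ℕ)-m)/n + 1) ⟨(l:ℕ), hl⟩
              ⟨((k:ℕ)-m) % n, Nat.mod_lt _ (fac_pos' (show 0 < n*(d-1) by have := k.2; omega))⟩
        else 0)
  else
    if hk : (k:ℕ) < m then 0
    else Wm S T (((i:ℕ)-m)/n + 1) (((k:ℕ)-m)/n + 1)
      ⟨((i:ℕ)-m) % n, Nat.mod_lt _ (fac_pos' (show 0 < n*(d-1) by have := i.2; omega))⟩
      ⟨((k:ℕ)-m) % n, Nat.mod_lt _ (fac_pos' (show 0 < n*(d-1) by have := k.2; omega))⟩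

noncomputable def Ym (S T : Matrix (Fin (m + n*(d-1))) (Fin (n*d)) ℂ) :
    Matrix (Fin (n*d)) (Fin (n*d)) ℂ := fun a b =>
  if ha : (a:ℕ) < n then
    -(Wm S T 0 ((b:ℕ)/n) ⟨(a:ℕ), ha⟩ ⟨(b:ℕ) % n, Nat.mod_lt _ (by omega)⟩)
  else
    S ⟨m + ((a:ℕ) - n), by have := bnd2 a.2 (by omega); omega⟩ b
    - (if n ≤ (b:ℕ) then
        Wm S T ((a:ℕ)/n) ((b:ℕ)/n)
          ⟨(a:ℕ) % n, Nat.mod_lt _ (fac_pos' (show 0 < n*d by have := a.2; omega))⟩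
          ⟨(b:ℕ) % n, Nat.mod_lt _ (fac_pos' (show 0 < n*d by have := a.2; omega))⟩
      else 0)

noncomputable def Nm (hd : 1 ≤ d) (Q₀ : Pol d m n)
    (S T : Matrix (Fin (m + n*(d-1))) (Fin (n*d)) ℂ) : Pol d m n := fun k i t =>
  if (k:ℕ) = d then
    S ⟨(i:ℕ), by have := i.2; omega⟩ ⟨(t:ℕ), by have := blk_lt t.2 hd; omega⟩
    - (Xm Q₀ S T * compA m n d Q₀) ⟨(i:ℕ), by have := i.2; omega⟩
        ⟨(t:ℕ), by have := blk_lt t.2 hd; omega⟩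
    - (compA m n d Q₀ * Ym S T) ⟨(i:ℕ), by have := i.2; omega⟩
        ⟨(t:ℕ), by have := blk_lt t.2 hd; omega⟩
  else
    T ⟨(i:ℕ), by have := i.2; omega⟩
      ⟨n*(d-1-(k:ℕ)) + (t:ℕ), by have := blk_lt t.2 (show d-1-(k:ℕ) < d by omega); omega⟩
    - (Xm Q₀ S T * compB m n d Q₀) ⟨(i:ℕ), by have := i.2; omega⟩
        ⟨n*(d-1-(k:ℕ)) + (t:ℕ), by have := blk_lt t.2 (show d-1-(k:ℕ) < d by omega); omega⟩
    - (compB m n d Q₀ * Ym S T) ⟨(i:ℕ), by have := i.2; omega⟩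
        ⟨n*(d-1-(k:ℕ)) + (t:ℕ), by have := blk_lt t.2 (show d-1-(k:ℕ) < d by omega); omega⟩

lemma dA_apply (N' : Pol d m n) (i : Fin (m + n*(d-1))) (j : Fin (n*d)) :
    (compA m n d N' - compA m n d 0) i j
      = if h : (i:ℕ) < m ∧ (j:ℕ) < n then N' (Fin.last d) ⟨(i:ℕ), h.1⟩ ⟨(j:ℕ), h.2⟩ else 0 := by
  by_cases hi : (i:ℕ) < m <;> by_cases hj : (j:ℕ) < n <;>
    simp [compA, hi, hj, Matrix.sub_apply]

lemma dB_apply (hn : 0 < n) (N' : Pol d m n) (i : Fin (m + n*(d-1))) (j : Fin (n*d)) :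
    (compB m n d N' - compB m n d 0) i j
      = if h : (i:ℕ) < m then
          N' ⟨d - 1 - (j:ℕ)/n, Nat.lt_succ_of_le ((Nat.sub_le _ _).trans (Nat.sub_le d 1))⟩ ⟨(i:ℕ), h⟩ ⟨(j:ℕ) % n, Nat.mod_lt _ hn⟩
        else 0 := by
  by_cases hi : (i:ℕ) < m <;> simp [compB, hi, hn, Matrix.sub_apply]

lemma mulA_right_ge (Q₀ : Pol d m n)
    (U : Matrix (Fin (m + n*(d-1))) (Fin (m + n*(d-1))) ℂ)
    (i : Fin (m + n*(d-1))) (j : Fin (n*d)) (hnj : n ≤ (j:ℕ)) :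
    (U * compA m n d Q₀) i j = U i ⟨m + ((j:ℕ) - n), by have := bnd2 j.2 hnj; omega⟩ := by
  have hb2 : m + ((j:ℕ) - n) < m + n*(d-1) := by have := bnd2 j.2 hnj; omega
  rw [Matrix.mul_apply]
  have hz : ∀ b : Fin (m + n*(d-1)), b ≠ ⟨m + ((j:ℕ) - n), hb2⟩ →
      U i b * compA m n d Q₀ b j = 0 := by
    intro b hb
    rcases Nat.lt_or_ge (b:ℕ) m with h | h
    · rw [compA]; rw [dif_pos h, dif_neg (by omega)]; rw [mul_zero]
    · rw [compA]; rw [dif_neg (by omega), if_neg ?_, mul_zero]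
      rintro ⟨h1, h2⟩
      exact hb (Fin.ext (by simp only [Fin.val_mk]; omega))
  rw [Finset.sum_eq_single (⟨m + ((j:ℕ) - n), hb2⟩ : Fin (m + n*(d-1)))
      (fun b _ hb => hz b hb) (fun h => absurd (Finset.mem_univ _) h)]
  rw [compA]; rw [dif_neg (by simp only [Fin.val_mk]; omega),
    if_pos ⟨by simp only [Fin.val_mk]; omega, hnj⟩, mul_one]

lemma mulA_left_ge (Q₀ : Pol d m n)
    (V : Matrix (Fin (n*d)) (Fin (n*d)) ℂ)
    (i : Fin (m + n*(d-1))) (hi : ¬ (i:ℕ) < m) (j : Fin (n*d)) :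
    (compA m n d Q₀ * V) i j = V ⟨n + ((i:ℕ) - m), bnd1 (by have := i.2; omega)⟩ j := by
  have hb2 : n + ((i:ℕ) - m) < n*d := bnd1 (by have := i.2; omega)
  rw [Matrix.mul_apply]
  have hz : ∀ b : Fin (n*d), b ≠ ⟨n + ((i:ℕ) - m), hb2⟩ →
      compA m n d Q₀ i b * V b j = 0 := by
    intro b hb
    rw [compA]; rw [dif_neg hi, if_neg ?_, zero_mul]
    rintro ⟨h1, h2⟩
    exact hb (Fin.ext (by simp only [Fin.val_mk]; omega))
  rw [Finset.sum_eq_single (⟨n + ((i:ℕ) - m), hb2⟩ : Fin (n*d))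
      (fun b _ hb => hz b hb) (fun h => absurd (Finset.mem_univ _) h)]
  rw [compA]; rw [dif_neg hi,
    if_pos ⟨by simp only [Fin.val_mk]; omega, by simp only [Fin.val_mk]; omega⟩, one_mul]

lemma mulB_left_ge (Q₀ : Pol d m n)
    (V : Matrix (Fin (n*d)) (Fin (n*d)) ℂ)
    (i : Fin (m + n*(d-1))) (hi : ¬ (i:ℕ) < m) (j : Fin (n*d)) :
    (compB m n d Q₀ * V) i j
      = -(V ⟨(i:ℕ) - m, by have h2 := i.2; have := Nat.mul_le_mul_left n (Nat.sub_le d 1); omega⟩ j) := by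
  have hb2 : (i:ℕ) - m < n*d := by
    have h2 := i.2; have := Nat.mul_le_mul_left n (Nat.sub_le d 1); omega
  rw [Matrix.mul_apply]
  have hz : ∀ b : Fin (n*d), b ≠ ⟨(i:ℕ) - m, hb2⟩ →
      compB m n d Q₀ i b * V b j = 0 := by
    intro b hb
    rw [compB]; rw [dif_neg hi, if_neg ?_, zero_mul]
    intro h1
    exact hb (Fin.ext (by simp only [Fin.val_mk]; omega))
  rw [Finset.sum_eq_single (⟨(i:ℕ) - m, hb2⟩ : Fin (n*d))
      (fun b _ hb => hz b hb) (fun h => absurd (Finset.mem_univ _) h)]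
  rw [compB]; rw [dif_neg hi, if_pos (by simp only [Fin.val_mk]), neg_one_mul]

lemma Xm_top (Q₀ : Pol d m n) (S T : Matrix (Fin (m + n*(d-1))) (Fin (n*d)) ℂ)
    (i : Fin (m + n*(d-1))) (hi : (i:ℕ) < m) (k : Fin (m + n*(d-1))) (hk : ¬ (k:ℕ) < m) :
    Xm Q₀ S T i k
      = S i ⟨n + ((k:ℕ) - m), bnd1 (by have := k.2; omega)⟩
      + ∑ l : Fin (n*d), (if hl : (l:ℕ) < n then
          Q₀ (Fin.last d) ⟨(i:ℕ), hi⟩ ⟨(l:ℕ), hl⟩ *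
            Wm S T 0 (((k:ℕ)-m)/n + 1) ⟨(l:ℕ), hl⟩
              ⟨((k:ℕ)-m) % n, Nat.mod_lt _ (fac_pos' (show 0 < n*(d-1) by have := k.2; omega))⟩
        else 0) := by
  rw [Xm]; rw [dif_pos hi, dif_neg hk]

lemma Xm_bot (Q₀ : Pol d m n) (S T : Matrix (Fin (m + n*(d-1))) (Fin (n*d)) ℂ)
    (i : Fin (m + n*(d-1))) (hi : ¬ (i:ℕ) < m) (k : Fin (m + n*(d-1))) (hk : ¬ (k:ℕ) < m) :
    Xm Q₀ S T i k
      = Wm S T (((i:ℕ)-m)/n + 1) (((k:ℕ)-m)/n + 1)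
        ⟨((i:ℕ)-m) % n, Nat.mod_lt _ (fac_pos' (show 0 < n*(d-1) by have := i.2; omega))⟩
        ⟨((k:ℕ)-m) % n, Nat.mod_lt _ (fac_pos' (show 0 < n*(d-1) by have := k.2; omega))⟩ := by
  rw [Xm]; rw [dif_neg hi, dif_neg hk]

lemma Ym_top (S T : Matrix (Fin (m + n*(d-1))) (Fin (n*d)) ℂ)
    (a : Fin (n*d)) (ha : (a:ℕ) < n) (b : Fin (n*d)) :
    Ym S T a b = -(Wm S T 0 ((b:ℕ)/n) ⟨(a:ℕ), ha⟩ ⟨(b:ℕ) % n, Nat.mod_lt _ (by omega)⟩) := by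
  rw [Ym]; rw [dif_pos ha]

lemma Ym_bot (S T : Matrix (Fin (m + n*(d-1))) (Fin (n*d)) ℂ)
    (a : Fin (n*d)) (ha : ¬ (a:ℕ) < n) (b : Fin (n*d)) :
    Ym S T a b
      = S ⟨m + ((a:ℕ) - n), by have := bnd2 a.2 (by omega); omega⟩ b
      - (if n ≤ (b:ℕ) then
          Wm S T ((a:ℕ)/n) ((b:ℕ)/n)
            ⟨(a:ℕ) % n, Nat.mod_lt _ (fac_pos' (show 0 < n*d by have := a.2; omega))⟩
            ⟨(b:ℕ) % n, Nat.mod_lt _ (fac_pos' (show 0 < n*d by have := a.2; omega))⟩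
        else 0) := by
  rw [Ym]; rw [dif_neg ha]

lemma Nm_last (hd : 1 ≤ d) (Q₀ : Pol d m n) (S T : Matrix (Fin (m + n*(d-1))) (Fin (n*d)) ℂ)
    (k : Fin (d+1)) (hk : (k:ℕ) = d) (i : Fin m) (t : Fin n) :
    Nm hd Q₀ S T k i t
      = S ⟨(i:ℕ), by have := i.2; omega⟩ ⟨(t:ℕ), by have := blk_lt t.2 hd; omega⟩
      - (Xm Q₀ S T * compA m n d Q₀) ⟨(i:ℕ), by have := i.2; omega⟩
          ⟨(t:ℕ), by have := blk_lt t.2 hd; omega⟩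
      - (compA m n d Q₀ * Ym S T) ⟨(i:ℕ), by have := i.2; omega⟩
          ⟨(t:ℕ), by have := blk_lt t.2 hd; omega⟩ := by
  rw [Nm]; rw [if_pos hk]

lemma Nm_ne (hd : 1 ≤ d) (Q₀ : Pol d m n) (S T : Matrix (Fin (m + n*(d-1))) (Fin (n*d)) ℂ)
    (k : Fin (d+1)) (hk : ¬ (k:ℕ) = d) (i : Fin m) (t : Fin n) :
    Nm hd Q₀ S T k i t
      = T ⟨(i:ℕ), by have := i.2; omega⟩
        ⟨n*(d-1-(k:ℕ)) + (t:ℕ), by have := blk_lt t.2 (show d-1-(k:ℕ) < d by omega); omega⟩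
      - (Xm Q₀ S T * compB m n d Q₀) ⟨(i:ℕ), by have := i.2; omega⟩
          ⟨n*(d-1-(k:ℕ)) + (t:ℕ), by have := blk_lt t.2 (show d-1-(k:ℕ) < d by omega); omega⟩
      - (compB m n d Q₀ * Ym S T) ⟨(i:ℕ), by have := i.2; omega⟩
          ⟨n*(d-1-(k:ℕ)) + (t:ℕ), by have := blk_lt t.2 (show d-1-(k:ℕ) < d by omega); omega⟩ := by
  rw [Nm]; rw [if_neg hk]

lemma key_rec' (S T : Matrix (Fin (m + n*(d-1))) (Fin (n*d)) ℂ) {r c : ℕ}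
    (hr1 : 1 ≤ r) (hr2 : r ≤ d-1) (hc : c ≤ d-1) (s t : Fin n) :
    (if c < d-1 then -(Wm S T r (c+1) s t) else 0) + Wm S T (r-1) c s t = Cm S T r c s t := by
  have h := key_rec S T hr1 hr2 hc
  by_cases hcd : c < d-1
  · rw [if_pos hcd] at h ⊢
    have h2 := congrFun (congrFun h s) t
    simpa [Matrix.add_apply, Matrix.neg_apply] using h2
  · rw [if_neg hcd] at h ⊢
    have h2 := congrFun (congrFun h s) t
    simpa [Matrix.add_apply] using h2

lemma mulXA_ge (Q₀ : Pol d m n) (S T : Matrix (Fin (m + n*(d-1))) (Fin (n*d)) ℂ)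
    (i : Fin (m + n*(d-1))) (hi : ¬ (i:ℕ) < m) (j : Fin (n*d)) (hn : 0 < n) :
    (Xm Q₀ S T * compA m n d Q₀) i j
      = if n ≤ (j:ℕ) then
          Wm S T (((i:ℕ)-m)/n + 1) ((j:ℕ)/n)
            ⟨((i:ℕ)-m) % n, Nat.mod_lt _ hn⟩ ⟨(j:ℕ) % n, Nat.mod_lt _ hn⟩
        else 0 := by
  by_cases hnj : n ≤ (j:ℕ)
  · rw [if_pos hnj, mulA_right_ge Q₀ _ i j hnj]
    rw [Xm_bot Q₀ S T i hi _ (by simp only [Fin.val_mk]; omega)]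
    simp only [Fin.val_mk, Nat.add_sub_cancel_left]
    rw [div_shift hn hnj]
    congr 1
    exact Fin.ext (mod_shift hnj)
  · rw [if_neg hnj, Matrix.mul_apply]
    apply Finset.sum_eq_zero
    intro k _
    rcases Nat.lt_or_ge (k:ℕ) m with h | h
    · rw [Xm]; rw [dif_neg hi, dif_pos h, zero_mul]
    · rw [compA]; rw [dif_neg (by omega), if_neg (by rintro ⟨h1,h2⟩; omega), mul_zero]

lemma mulXB_ge (Q₀ : Pol d m n) (S T : Matrix (Fin (m + n*(d-1))) (Fin (n*d)) ℂ)
    (i : Fin (m + n*(d-1))) (hi : ¬ (i:ℕ) < m) (j : Fin (n*d)) (hn : 0 < n) :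
    (Xm Q₀ S T * compB m n d Q₀) i j
      = if (j:ℕ) < n*(d-1) then
          -(Wm S T (((i:ℕ)-m)/n + 1) ((j:ℕ)/n + 1)
            ⟨((i:ℕ)-m) % n, Nat.mod_lt _ hn⟩ ⟨(j:ℕ) % n, Nat.mod_lt _ hn⟩)
        else 0 := by
  by_cases hj : (j:ℕ) < n*(d-1)
  · rw [if_pos hj, Matrix.mul_apply]
    have hb2 : m + (j:ℕ) < m + n*(d-1) := by omega
    have hz : ∀ b : Fin (m + n*(d-1)), b ≠ ⟨m + (j:ℕ), hb2⟩ →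
        Xm Q₀ S T i b * compB m n d Q₀ b j = 0 := by
      intro b hb
      rcases Nat.lt_or_ge (b:ℕ) m with h | h
      · rw [Xm]; rw [dif_neg hi, dif_pos h, zero_mul]
      · rw [compB]; rw [dif_neg (by omega), if_neg ?_, mul_zero]
        intro h1; exact hb (Fin.ext (by simp only [Fin.val_mk]; omega))
    rw [Finset.sum_eq_single (⟨m + (j:ℕ), hb2⟩ : Fin (m + n*(d-1)))
        (fun b _ hb => hz b hb) (fun h => absurd (Finset.mem_univ _) h)]
    rw [compB]; rw [dif_neg (by simp only [Fin.val_mk]; omega),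
      if_pos (by simp only [Fin.val_mk]; omega)]
    rw [Xm_bot Q₀ S T i hi _ (by simp only [Fin.val_mk]; omega)]
    simp only [Fin.val_mk, Nat.add_sub_cancel_left]
    rw [mul_neg_one]
  · rw [if_neg hj, Matrix.mul_apply]
    apply Finset.sum_eq_zero
    intro k _
    rcases Nat.lt_or_ge (k:ℕ) m with h | h
    · rw [Xm]; rw [dif_neg hi, dif_pos h, zero_mul]
    · rw [compB]; rw [dif_neg (by omega), if_neg (by intro h1; have := k.2; omega), mul_zero]

set_option maxHeartbeats 1000000 in
lemma eq1 (hn : 0 < n) (hd : 1 ≤ d) (Q₀ : Pol d m n)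
    (S T : Matrix (Fin (m + n*(d-1))) (Fin (n*d)) ℂ) :
    Xm Q₀ S T * compA m n d Q₀ + compA m n d Q₀ * Ym S T
      + (compA m n d (Nm hd Q₀ S T) - compA m n d 0) = S := by
  funext i j
  rw [Matrix.add_apply, Matrix.add_apply, dA_apply]
  by_cases hi : (i:ℕ) < m
  · by_cases hj : (j:ℕ) < n
    · rw [dif_pos ⟨hi, hj⟩]
      rw [Nm_last hd Q₀ S T _ (Fin.val_last d) ⟨(i:ℕ), hi⟩ ⟨(j:ℕ), hj⟩]
      simp only [Fin.val_mk, Fin.eta]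
      ring
    · rw [dif_neg (fun h => hj h.2), add_zero]
      have hnj : n ≤ (j:ℕ) := by omega
      rw [mulA_right_ge Q₀ _ i j hnj]
      rw [Xm_top Q₀ S T i hi _ (by simp only [Fin.val_mk]; omega)]
      rw [Matrix.mul_apply]
      simp only [Fin.val_mk, Nat.add_sub_cancel_left]
      rw [div_shift hn hnj]
      have hmk : (⟨((j:ℕ)-n) % n, Nat.mod_lt _ hn⟩ : Fin n) = ⟨(j:ℕ) % n, Nat.mod_lt _ hn⟩ :=
        Fin.ext (mod_shift hnj)
      simp only [hmk]
      rw [add_assoc, ← Finset.sum_add_distrib]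
      have hz : ∀ l : Fin (n*d), l ∈ Finset.univ →
          ((if hl : (l:ℕ) < n then
              Q₀ (Fin.last d) ⟨(i:ℕ), hi⟩ ⟨(l:ℕ), hl⟩ *
                Wm S T 0 ((j:ℕ)/n) ⟨(l:ℕ), hl⟩ ⟨(j:ℕ) % n, Nat.mod_lt _ hn⟩
            else 0)
            + compA m n d Q₀ i l * Ym S T l j) = 0 := by
        intro l _
        by_cases hl : (l:ℕ) < n
        · rw [dif_pos hl]
          rw [compA]; rw [dif_pos hi, dif_pos hl]
          rw [Ym_top S T l hl j, mul_neg, add_neg_eq_zero]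
        · rw [dif_neg hl]
          rw [compA]; rw [dif_pos hi, dif_neg hl, zero_mul, add_zero]
      rw [Finset.sum_eq_zero hz, add_zero]
      have hjj : (⟨n + ((j:ℕ) - n), bnd1 (by have := bnd2 j.2 hnj; omega)⟩ : Fin (n*d)) = j :=
        Fin.ext (by simp only [Fin.val_mk]; omega)
      rw [hjj]
  · rw [dif_neg (fun h => hi h.1), add_zero]
    rw [mulXA_ge Q₀ S T i hi j hn, mulA_left_ge Q₀ _ i hi j]
    rw [Ym_bot S T ⟨n + ((i:ℕ) - m), bnd1 (by have := i.2; omega)⟩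
      (by simp only [Fin.val_mk]; omega) j]
    simp only [Fin.val_mk, Nat.add_sub_cancel_left]
    have e1 : (n + ((i:ℕ)-m))/n = ((i:ℕ)-m)/n + 1 := by
      rw [Nat.add_comm, Nat.add_div_right _ hn]
    have e2 : (n + ((i:ℕ)-m))%n = ((i:ℕ)-m)%n := by
      rw [Nat.add_comm, Nat.add_mod_right]
    simp only [e1, e2]
    have hieq : (⟨m + ((i:ℕ) - m), by have := i.2; omega⟩ : Fin (m + n*(d-1))) = i :=
      Fin.ext (by simp only [Fin.val_mk]; omega)
    rw [hieq]
    ring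

set_option maxHeartbeats 1600000 in
lemma eq2 (hn : 0 < n) (hd : 1 ≤ d) (Q₀ : Pol d m n)
    (S T : Matrix (Fin (m + n*(d-1))) (Fin (n*d)) ℂ) :
    Xm Q₀ S T * compB m n d Q₀ + compB m n d Q₀ * Ym S T
      + (compB m n d (Nm hd Q₀ S T) - compB m n d 0) = T := by
  funext i j
  rw [Matrix.add_apply, Matrix.add_apply, dB_apply hn]
  have hjd : (j:ℕ)/n < d := by
    rw [Nat.div_lt_iff_lt_mul hn, Nat.mul_comm d n]; exact j.2
  by_cases hi : (i:ℕ) < m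
  · rw [dif_pos hi]
    have hne : ¬ d - 1 - (j:ℕ)/n = d :=
      Nat.ne_of_lt (lt_of_le_of_lt (Nat.sub_le _ _) (by omega))
    rw [Nm_ne hd Q₀ S T _ (by simp only [Fin.val_mk]; exact hne) ⟨(i:ℕ), hi⟩
      ⟨(j:ℕ) % n, Nat.mod_lt _ hn⟩]
    simp only [Fin.val_mk, Fin.eta]
    have hsub : d-1-(d-1-(j:ℕ)/n) = (j:ℕ)/n := Nat.sub_sub_self (Nat.le_pred_of_lt hjd)
    have hcol : (⟨n*(d-1-(d-1-(j:ℕ)/n)) + ((j:ℕ) % n),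
        by have := blk_lt (Nat.mod_lt (j:ℕ) hn)
             (show d-1-(d-1-(j:ℕ)/n) < d from lt_of_le_of_lt (Nat.sub_le _ _) (by omega)); omega⟩
          : Fin (n*d)) = j := by
      apply Fin.ext
      simp only [Fin.val_mk]
      rw [hsub, Nat.div_add_mod]
    rw [hcol]
    ring
  · rw [dif_neg hi, add_zero]
    rw [mulXB_ge Q₀ S T i hi j hn, mulB_left_ge Q₀ _ i hi j]
    have hdpos : 0 < n*(d-1) := by have := i.2; omega
    have hd2 : 1 ≤ d - 1 := fac_pos hdpos
    have hc : (j:ℕ)/n ≤ d-1 := Nat.le_pred_of_lt hjd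
    have hcond : ((j:ℕ) < n*(d-1)) = ((j:ℕ)/n < d-1) := by
      rw [eq_iff_iff, Nat.div_lt_iff_lt_mul hn, Nat.mul_comm n (d-1)]
    by_cases han : (i:ℕ) - m < n
    · rw [Ym_top S T ⟨(i:ℕ) - m,
          by have h2 := i.2; have := Nat.mul_le_mul_left n (Nat.sub_le d 1); omega⟩
        (by simp only [Fin.val_mk]; exact han) j, neg_neg]
      simp only [Fin.val_mk]
      have ha0 : ((i:ℕ) - m)/n = 0 := Nat.div_eq_of_lt han
      have ham : ((i:ℕ) - m) % n = (i:ℕ) - m := Nat.mod_eq_of_lt han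
      simp only [ha0, ham, Nat.zero_add]
      have hkey := key_rec' S T (r := 1) le_rfl hd2 hc
        ⟨(i:ℕ)-m, han⟩ ⟨(j:ℕ)%n, Nat.mod_lt _ hn⟩
      rw [show (1:ℕ)-1 = 0 from rfl] at hkey
      rw [Cm] at hkey
      rw [dif_pos ⟨le_rfl, hd2, hc⟩, if_neg (show ¬ (2:ℕ) ≤ 1 by omega)] at hkey
      simp only [Fin.val_mk, show (1:ℕ)-1 = 0 from rfl, Nat.mul_zero, Nat.zero_add,
        add_zero] at hkey
      have hrow : (⟨m + ((i:ℕ)-m), by have := i.2; omega⟩ : Fin (m + n*(d-1))) = i :=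
        Fin.ext (by simp only [Fin.val_mk]; omega)
      have hcol2 : (⟨n*((j:ℕ)/n) + ((j:ℕ)%n), by rw [Nat.div_add_mod]; exact j.2⟩
          : Fin (n*d)) = j :=
        Fin.ext (by simp only [Fin.val_mk]; exact Nat.div_add_mod _ _)
      rw [hrow, hcol2] at hkey
      simp only [hcond]
      linear_combination hkey
    · rw [Ym_bot S T ⟨(i:ℕ) - m,
          by have h2 := i.2; have := Nat.mul_le_mul_left n (Nat.sub_le d 1); omega⟩
        (by simp only [Fin.val_mk]; exact han) j]
      simp only [Fin.val_mk]
      have hna : n ≤ (i:ℕ) - m := by omega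
      have hr2 : ((i:ℕ)-m)/n + 1 ≤ d-1 := by
        have h9 : ((i:ℕ)-m)/n < d-1 := by
          rw [Nat.div_lt_iff_lt_mul hn, Nat.mul_comm (d-1) n]; have := i.2; omega
        omega
      have hkey := key_rec' S T (r := ((i:ℕ)-m)/n + 1) (Nat.succ_le_succ (Nat.zero_le _)) hr2 hc
        ⟨((i:ℕ)-m) % n, Nat.mod_lt _ hn⟩ ⟨(j:ℕ)%n, Nat.mod_lt _ hn⟩
      rw [Nat.add_sub_cancel] at hkey
      rw [Cm] at hkey
      have hdiv1 : 1 ≤ ((i:ℕ)-m)/n := (Nat.one_le_div_iff hn).2 hna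
      rw [dif_pos ⟨Nat.succ_le_succ (Nat.zero_le _), hr2, hc⟩,
        if_pos (Nat.succ_le_succ hdiv1)] at hkey
      simp only [Fin.val_mk, Nat.add_sub_cancel] at hkey
      have e1 : n*(((i:ℕ)-m)/n) + ((i:ℕ)-m) % n = (i:ℕ) - m := Nat.div_add_mod _ _
      have e2 : n*(((i:ℕ)-m)/n + 1 - 2) + ((i:ℕ)-m) % n = (i:ℕ) - m - n := by
        have h6 : n*(((i:ℕ)-m)/n) = n*(((i:ℕ)-m)/n - 1) + n := by
          rw [← Nat.mul_succ]; congr 1; omega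
        rw [show ((i:ℕ)-m)/n + 1 - 2 = ((i:ℕ)-m)/n - 1 by omega]
        omega
      simp only [e1, e2] at hkey
      have hrow : (⟨m + ((i:ℕ)-m), by have := i.2; omega⟩ : Fin (m + n*(d-1))) = i :=
        Fin.ext (by simp only [Fin.val_mk]; omega)
      have hcol2 : (⟨n*((j:ℕ)/n) + ((j:ℕ)%n), by rw [Nat.div_add_mod]; exact j.2⟩
          : Fin (n*d)) = j :=
        Fin.ext (by simp only [Fin.val_mk]; exact Nat.div_add_mod _ _)
      rw [hrow, hcol2] at hkey
      have hite : (if n ≤ (j:ℕ) then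
            Wm S T (((i:ℕ)-m)/n) ((j:ℕ)/n)
              ⟨((i:ℕ)-m) % n, Nat.mod_lt _ hn⟩ ⟨(j:ℕ) % n, Nat.mod_lt _ hn⟩
          else 0)
          = Wm S T (((i:ℕ)-m)/n) ((j:ℕ)/n)
              ⟨((i:ℕ)-m) % n, Nat.mod_lt _ hn⟩ ⟨(j:ℕ) % n, Nat.mod_lt _ hn⟩ := by
        by_cases hb : n ≤ (j:ℕ)
        · rw [if_pos hb]
        · rw [if_neg hb, Nat.div_eq_of_lt (show (j:ℕ) < n by omega), Wm_zero]
          simp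
      rw [hite]
      simp only [hcond]
      linear_combination hkey

lemma solver (hn : 0 < n) (hd : 1 ≤ d) (Q₀ : Pol d m n)
    (S T : Matrix (Fin (m + n*(d-1))) (Fin (n*d)) ℂ) :
    ∃ (X : Matrix (Fin (m + n*(d-1))) (Fin (m + n*(d-1))) ℂ)
      (Y : Matrix (Fin (n*d)) (Fin (n*d)) ℂ) (N' : Pol d m n),
      X * compA m n d Q₀ + compA m n d Q₀ * Y + (compA m n d N' - compA m n d 0) = S
      ∧ X * compB m n d Q₀ + compB m n d Q₀ * Y + (compB m n d N' - compB m n d 0) = T :=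
  ⟨Xm Q₀ S T, Ym S T, Nm hd Q₀ S T, eq1 hn hd Q₀ S T, eq2 hn hd Q₀ S T⟩

end Solver


lemma StrictEquiv.trans' {p q : ℕ} {L M N : Pencil p q}
    (h1 : StrictEquiv L M) (h2 : StrictEquiv M N) : StrictEquiv L N := by
  obtain ⟨Q, R, hQ, hR, m1, m2⟩ := h1
  obtain ⟨Q', R', hQ', hR', m3, m4⟩ := h2
  refine ⟨Q * Q', R * R', hQ.mul hQ', hR.mul hR', ?_, ?_⟩
  · rw [Matrix.mul_inv_rev, ← m3, ← m1]; simp only [Matrix.mul_assoc]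
  · rw [Matrix.mul_inv_rev, ← m4, ← m2]; simp only [Matrix.mul_assoc]

lemma strictEquiv_conj {p q : ℕ} (A B : Matrix (Fin p) (Fin q) ℂ)
    {Q : Matrix (Fin p) (Fin p) ℂ} {R : Matrix (Fin q) (Fin q) ℂ}
    (hQ : IsUnit Q) (hR : IsUnit R) :
    StrictEquiv ((Q * A) * R, (Q * B) * R) (A, B) := by
  have hdQ : IsUnit Q.det := (Matrix.isUnit_iff_isUnit_det Q).1 hQ
  have hdR : IsUnit R.det := (Matrix.isUnit_iff_isUnit_det R).1 hR
  refine ⟨Q, R⁻¹, hQ, (Matrix.isUnit_nonsing_inv_iff).2 hR, ?_, ?_⟩ <;>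
  · show _ = _
    simp only [← Matrix.mul_assoc]
    rw [Matrix.nonsing_inv_mul Q hdQ, Matrix.one_mul, Matrix.mul_assoc,
      Matrix.mul_nonsing_inv R hdR, Matrix.mul_one]


section Analysis

attribute [local instance] Matrix.normedAddCommGroup Matrix.normedSpace

variable (m n d : ℕ)

noncomputable def linA : Pol d m n →ₗ[ℂ] Matrix (Fin (m + n*(d-1))) (Fin (n*d)) ℂ where
  toFun M := compA m n d M - compA m n d 0
  map_add' M N := by
    funext i j
    by_cases hi : (i:ℕ) < m <;> by_cases hj : (j:ℕ) < n <;>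
      simp [compA, hi, hj, Matrix.sub_apply, Matrix.add_apply]
  map_smul' c M := by
    funext i j
    by_cases hi : (i:ℕ) < m <;> by_cases hj : (j:ℕ) < n <;>
      simp [compA, hi, hj, Matrix.sub_apply, Matrix.smul_apply]

noncomputable def linB : Pol d m n →ₗ[ℂ] Matrix (Fin (m + n*(d-1))) (Fin (n*d)) ℂ where
  toFun M := compB m n d M - compB m n d 0
  map_add' M N := by
    funext i j
    by_cases hi : (i:ℕ) < m <;> by_cases hn0 : 0 < n <;>
      simp [compB, hi, hn0, Matrix.sub_apply, Matrix.add_apply]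
  map_smul' c M := by
    funext i j
    by_cases hi : (i:ℕ) < m <;> by_cases hn0 : 0 < n <;>
      simp [compB, hi, hn0, Matrix.sub_apply, Matrix.smul_apply]

noncomputable def compLin : Pol d m n →ₗ[ℂ] Pencil (m + n*(d-1)) (n*d) :=
  (linA m n d).prod (linB m n d)

lemma compA_eq (M : Pol d m n) : compA m n d M = linA m n d M + compA m n d 0 := by
  show _ = (compA m n d M - compA m n d 0) + compA m n d 0
  rw [sub_add_cancel]

lemma compB_eq (M : Pol d m n) : compB m n d M = linB m n d M + compB m n d 0 := by
  show _ = (compB m n d M - compB m n d 0) + compB m n d 0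
  rw [sub_add_cancel]

lemma comp_eq_affine (M : Pol d m n) : comp m n d M = compLin m n d M + comp m n d 0 :=
  Prod.ext (compA_eq m n d M) (compB_eq m n d M)

lemma continuous_comp : Continuous (comp m n d) := by
  have h : comp m n d = fun M => compLin m n d M + comp m n d 0 :=
    funext (comp_eq_affine m n d)
  rw [h]
  exact (Continuous.add (LinearMap.toContinuousLinearMap (compLin m n d)).continuous
    continuous_const)

lemma isClosed_GSYL : IsClosed (GSYL m n d) := by
  have hset : GSYL m n d = (fun L : Pencil (m + n*(d-1)) (n*d) => L - comp m n d 0) ⁻¹'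
      (LinearMap.range (compLin m n d) : Set (Pencil (m + n*(d-1)) (n*d))) := by
    ext L
    simp only [GSYL, Set.mem_range, Set.mem_preimage, SetLike.mem_coe, LinearMap.mem_range]
    constructor
    · rintro ⟨M, rfl⟩
      exact ⟨M, by rw [comp_eq_affine m n d M]; abel⟩
    · rintro ⟨M, hM⟩
      exact ⟨M, by rw [comp_eq_affine m n d M, hM]; abel⟩
  rw [hset]
  exact (Submodule.closed_of_finiteDimensional _).preimage (continuous_id.sub continuous_const)

lemma isOpen_isUnit (k : ℕ) : IsOpen {Q : Matrix (Fin k) (Fin k) ℂ | IsUnit Q} := by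
  have hset : {Q : Matrix (Fin k) (Fin k) ℂ | IsUnit Q}
      = (fun Q : Matrix (Fin k) (Fin k) ℂ => Q.det) ⁻¹' {(0:ℂ)}ᶜ := by
    ext Q
    simp [Matrix.isUnit_iff_isUnit_det, isUnit_iff_ne_zero]
  rw [hset]
  exact (isOpen_compl_singleton).preimage (Continuous.matrix_det continuous_id)

noncomputable def mulCLM (a b c : ℕ) :
    Matrix (Fin a) (Fin b) ℂ →L[ℂ] Matrix (Fin b) (Fin c) ℂ →L[ℂ] Matrix (Fin a) (Fin c) ℂ :=
  LinearMap.toContinuousLinearMap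
    ((LinearMap.toContinuousLinearMap (𝕜 := ℂ)
        (E := Matrix (Fin b) (Fin c) ℂ) (F' := Matrix (Fin a) (Fin c) ℂ)).toLinearMap.comp
      (LinearMap.mk₂ ℂ
        (fun (X : Matrix (Fin a) (Fin b) ℂ) (Y : Matrix (Fin b) (Fin c) ℂ) => X * Y)
        (fun X X' Y => Matrix.add_mul X X' Y)
        (fun r X Y => Matrix.smul_mul r X Y)
        (fun X Y Y' => Matrix.mul_add X Y Y')
        (fun r X Y => Matrix.mul_smul X r Y)))

lemma mulCLM_apply (a b c : ℕ) (X : Matrix (Fin a) (Fin b) ℂ) (Y : Matrix (Fin b) (Fin c) ℂ) :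
    mulCLM a b c X Y = X * Y := by
  simp [mulCLM]

lemma isBBM_mul (a b c : ℕ) :
    IsBoundedBilinearMap ℂ
      (fun x : Matrix (Fin a) (Fin b) ℂ × Matrix (Fin b) (Fin c) ℂ => x.1 * x.2) := by
  have h := (mulCLM a b c).isBoundedBilinearMap
  have e : (fun x : Matrix (Fin a) (Fin b) ℂ × Matrix (Fin b) (Fin c) ℂ => x.1 * x.2)
      = fun x => mulCLM a b c x.1 x.2 := funext fun x => (mulCLM_apply a b c x.1 x.2).symm
  rw [e]
  exact h

noncomputable def Fmap
    (x : (Matrix (Fin (m + n*(d-1))) (Fin (m + n*(d-1))) ℂ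
          × Matrix (Fin (n*d)) (Fin (n*d)) ℂ) × Pol d m n) :
    Pencil (m + n*(d-1)) (n*d) :=
  ((x.1.1 * compA m n d x.2) * x.1.2, (x.1.1 * compB m n d x.2) * x.1.2)

lemma Fmap_one (Q₀ : Pol d m n) : Fmap m n d ((1, 1), Q₀) = comp m n d Q₀ := by
  simp only [Fmap, Matrix.one_mul, Matrix.mul_one]
  rfl

set_option maxHeartbeats 2000000 in
lemma exists_deriv (hn : 0 < n) (hd : 1 ≤ d) (Q₀ : Pol d m n) :
    ∃ D : ((Matrix (Fin (m + n*(d-1))) (Fin (m + n*(d-1))) ℂ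
              × Matrix (Fin (n*d)) (Fin (n*d)) ℂ) × Pol d m n) →L[ℂ]
            Pencil (m + n*(d-1)) (n*d),
        HasStrictFDerivAt (Fmap m n d) D
          (((1, 1), Q₀) :
            (Matrix (Fin (m + n*(d-1))) (Fin (m + n*(d-1))) ℂ
              × Matrix (Fin (n*d)) (Fin (n*d)) ℂ) × Pol d m n)
        ∧ LinearMap.range D.toLinearMap = ⊤ := by
  classical
  let π₁ := (ContinuousLinearMap.fst ℂ (Matrix (Fin (m + n*(d-1))) (Fin (m + n*(d-1))) ℂ) (Matrix (Fin (n*d)) (Fin (n*d)) ℂ)).comp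
    (ContinuousLinearMap.fst ℂ (Matrix (Fin (m + n*(d-1))) (Fin (m + n*(d-1))) ℂ × Matrix (Fin (n*d)) (Fin (n*d)) ℂ) (Pol d m n))
  let π₂ := (ContinuousLinearMap.snd ℂ (Matrix (Fin (m + n*(d-1))) (Fin (m + n*(d-1))) ℂ) (Matrix (Fin (n*d)) (Fin (n*d)) ℂ)).comp
    (ContinuousLinearMap.fst ℂ (Matrix (Fin (m + n*(d-1))) (Fin (m + n*(d-1))) ℂ × Matrix (Fin (n*d)) (Fin (n*d)) ℂ) (Pol d m n))
  let π₃ := ContinuousLinearMap.snd ℂ (Matrix (Fin (m + n*(d-1))) (Fin (m + n*(d-1))) ℂ × Matrix (Fin (n*d)) (Fin (n*d)) ℂ) (Pol d m n)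
  let lA := LinearMap.toContinuousLinearMap (linA m n d)
  let lB := LinearMap.toContinuousLinearMap (linB m n d)
  set a₀ : (Matrix (Fin (m + n*(d-1))) (Fin (m + n*(d-1))) ℂ × Matrix (Fin (n*d)) (Fin (n*d)) ℂ) × Pol d m n := ((1, 1), Q₀) with ha₀
  have hA : HasStrictFDerivAt (fun x : (Matrix (Fin (m + n*(d-1))) (Fin (m + n*(d-1))) ℂ × Matrix (Fin (n*d)) (Fin (n*d)) ℂ) × Pol d m n => compA m n d x.2)
      (lA.comp π₃) a₀ := by
    have h0 := (lA.comp π₃).hasStrictFDerivAt (x := a₀)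
    have h1 := h0.add_const (compA m n d 0)
    have hfun : (fun x : (Matrix (Fin (m + n*(d-1))) (Fin (m + n*(d-1))) ℂ × Matrix (Fin (n*d)) (Fin (n*d)) ℂ) × Pol d m n => compA m n d x.2)
        = fun x => (lA.comp π₃) x + compA m n d 0 :=
      funext fun x => compA_eq m n d x.2
    rw [hfun]
    exact h1
  have hB : HasStrictFDerivAt (fun x : (Matrix (Fin (m + n*(d-1))) (Fin (m + n*(d-1))) ℂ × Matrix (Fin (n*d)) (Fin (n*d)) ℂ) × Pol d m n => compB m n d x.2)
      (lB.comp π₃) a₀ := by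
    have h0 := (lB.comp π₃).hasStrictFDerivAt (x := a₀)
    have h1 := h0.add_const (compB m n d 0)
    have hfun : (fun x : (Matrix (Fin (m + n*(d-1))) (Fin (m + n*(d-1))) ℂ × Matrix (Fin (n*d)) (Fin (n*d)) ℂ) × Pol d m n => compB m n d x.2)
        = fun x => (lB.comp π₃) x + compB m n d 0 :=
      funext fun x => compB_eq m n d x.2
    rw [hfun]
    exact h1
  have hmul1A : HasStrictFDerivAt (fun x : (Matrix (Fin (m + n*(d-1))) (Fin (m + n*(d-1))) ℂ × Matrix (Fin (n*d)) (Fin (n*d)) ℂ) × Pol d m n => x.1.1 * compA m n d x.2)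
      (((isBBM_mul (m + n*(d-1)) (m + n*(d-1)) (n*d)).deriv ((1 : Matrix (Fin (m + n*(d-1))) (Fin (m + n*(d-1))) ℂ), compA m n d Q₀)).comp
        (π₁.prod (lA.comp π₃))) a₀ :=
    ((isBBM_mul _ _ _).hasStrictFDerivAt ((1 : Matrix (Fin (m + n*(d-1))) (Fin (m + n*(d-1))) ℂ), compA m n d Q₀)).comp a₀
      (HasStrictFDerivAt.prodMk (π₁.hasStrictFDerivAt) hA)
  have hmul1B : HasStrictFDerivAt (fun x : (Matrix (Fin (m + n*(d-1))) (Fin (m + n*(d-1))) ℂ × Matrix (Fin (n*d)) (Fin (n*d)) ℂ) × Pol d m n => x.1.1 * compB m n d x.2)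
      (((isBBM_mul (m + n*(d-1)) (m + n*(d-1)) (n*d)).deriv ((1 : Matrix (Fin (m + n*(d-1))) (Fin (m + n*(d-1))) ℂ), compB m n d Q₀)).comp
        (π₁.prod (lB.comp π₃))) a₀ :=
    ((isBBM_mul _ _ _).hasStrictFDerivAt ((1 : Matrix (Fin (m + n*(d-1))) (Fin (m + n*(d-1))) ℂ), compB m n d Q₀)).comp a₀
      (HasStrictFDerivAt.prodMk (π₁.hasStrictFDerivAt) hB)
  have hAfull : HasStrictFDerivAt
      (fun x : (Matrix (Fin (m + n*(d-1))) (Fin (m + n*(d-1))) ℂ × Matrix (Fin (n*d)) (Fin (n*d)) ℂ) × Pol d m n => (x.1.1 * compA m n d x.2) * x.1.2)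
      (((isBBM_mul (m + n*(d-1)) (n*d) (n*d)).deriv
          ((1 : Matrix (Fin (m + n*(d-1))) (Fin (m + n*(d-1))) ℂ) * compA m n d Q₀, (1 : Matrix (Fin (n*d)) (Fin (n*d)) ℂ))).comp
        ((((isBBM_mul (m + n*(d-1)) (m + n*(d-1)) (n*d)).deriv
            ((1 : Matrix (Fin (m + n*(d-1))) (Fin (m + n*(d-1))) ℂ), compA m n d Q₀)).comp (π₁.prod (lA.comp π₃))).prod π₂)) a₀ :=
    ((isBBM_mul _ _ _).hasStrictFDerivAt ((1 : Matrix (Fin (m + n*(d-1))) (Fin (m + n*(d-1))) ℂ) * compA m n d Q₀, (1 : Matrix (Fin (n*d)) (Fin (n*d)) ℂ))).comp a₀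
      (hmul1A.prodMk (π₂.hasStrictFDerivAt))
  have hBfull : HasStrictFDerivAt
      (fun x : (Matrix (Fin (m + n*(d-1))) (Fin (m + n*(d-1))) ℂ × Matrix (Fin (n*d)) (Fin (n*d)) ℂ) × Pol d m n => (x.1.1 * compB m n d x.2) * x.1.2)
      (((isBBM_mul (m + n*(d-1)) (n*d) (n*d)).deriv
          ((1 : Matrix (Fin (m + n*(d-1))) (Fin (m + n*(d-1))) ℂ) * compB m n d Q₀, (1 : Matrix (Fin (n*d)) (Fin (n*d)) ℂ))).comp
        ((((isBBM_mul (m + n*(d-1)) (m + n*(d-1)) (n*d)).deriv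
            ((1 : Matrix (Fin (m + n*(d-1))) (Fin (m + n*(d-1))) ℂ), compB m n d Q₀)).comp (π₁.prod (lB.comp π₃))).prod π₂)) a₀ :=
    ((isBBM_mul _ _ _).hasStrictFDerivAt ((1 : Matrix (Fin (m + n*(d-1))) (Fin (m + n*(d-1))) ℂ) * compB m n d Q₀, (1 : Matrix (Fin (n*d)) (Fin (n*d)) ℂ))).comp a₀
      (hmul1B.prodMk (π₂.hasStrictFDerivAt))
  refine ⟨_, hAfull.prodMk hBfull, ?_⟩
  rw [LinearMap.range_eq_top]
  rintro ⟨S, T⟩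
  obtain ⟨X, Y, N', e1, e2⟩ := solver hn hd Q₀ S T
  refine ⟨((X, Y), N'), ?_⟩
  simp only [ContinuousLinearMap.coe_coe, ContinuousLinearMap.prod_apply, ContinuousLinearMap.coe_comp',
    Function.comp_apply, IsBoundedBilinearMap.deriv_apply, ContinuousLinearMap.coe_fst',
    ContinuousLinearMap.coe_snd', LinearMap.coe_toContinuousLinearMap', π₁, π₂, π₃, lA, lB]
  have hlA : linA m n d N' = compA m n d N' - compA m n d 0 := rfl
  have hlB : linB m n d N' = compB m n d N' - compB m n d 0 := rfl
  refine Prod.ext ?_ ?_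
  · change (1 : Matrix (Fin (m + n*(d-1))) (Fin (m + n*(d-1))) ℂ) * compA m n d Q₀ * Y + ((1 : Matrix (Fin (m + n*(d-1))) (Fin (m + n*(d-1))) ℂ) * linA m n d N' + X * compA m n d Q₀) * (1 : Matrix (Fin (n*d)) (Fin (n*d)) ℂ) = S
    simp only [Matrix.one_mul, Matrix.mul_one, hlA]
    rw [← e1]; abel
  · change (1 : Matrix (Fin (m + n*(d-1))) (Fin (m + n*(d-1))) ℂ) * compB m n d Q₀ * Y + ((1 : Matrix (Fin (m + n*(d-1))) (Fin (m + n*(d-1))) ℂ) * linB m n d N' + X * compB m n d Q₀) * (1 : Matrix (Fin (n*d)) (Fin (n*d)) ℂ) = T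
    simp only [Matrix.one_mul, Matrix.mul_one, hlB]
    rw [← e2]; abel

lemma mem_closure_inter (hn : 0 < n) (hd : 1 ≤ d) (P Q₀ : Pol d m n)
    (hQ : comp m n d Q₀ ∈ closure (orbE (comp m n d P))) :
    comp m n d Q₀ ∈ closure (orbE (comp m n d P) ∩ GSYL m n d) := by
  rw [mem_closure_iff_nhds] at hQ ⊢
  intro U hU
  obtain ⟨D, hD, hrange⟩ := exists_deriv m n d hn hd Q₀
  have hmap := hD.map_nhds_eq_of_surj hrange
  set a₀ : (Matrix (Fin (m + n*(d-1))) (Fin (m + n*(d-1))) ℂ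
      × Matrix (Fin (n*d)) (Fin (n*d)) ℂ) × Pol d m n := ((1, 1), Q₀) with ha₀
  set W : Set ((Matrix (Fin (m + n*(d-1))) (Fin (m + n*(d-1))) ℂ
      × Matrix (Fin (n*d)) (Fin (n*d)) ℂ) × Pol d m n)
    := {x | IsUnit x.1.1 ∧ IsUnit x.1.2 ∧ comp m n d x.2 ∈ U} with hWdef
  have hW : W ∈ nhds a₀ := by
    have h1 := isOpen_isUnit (m + n*(d-1))
    have h2 := isOpen_isUnit (n*d)
    have m1 : (fun x : (Matrix (Fin (m + n*(d-1))) (Fin (m + n*(d-1))) ℂ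
        × Matrix (Fin (n*d)) (Fin (n*d)) ℂ) × Pol d m n => x.1.1) ⁻¹'
          {Q | IsUnit Q} ∈ nhds a₀ :=
      ((h1.preimage (continuous_fst.comp continuous_fst)).mem_nhds isUnit_one)
    have m2 : (fun x : (Matrix (Fin (m + n*(d-1))) (Fin (m + n*(d-1))) ℂ
        × Matrix (Fin (n*d)) (Fin (n*d)) ℂ) × Pol d m n => x.1.2) ⁻¹'
          {Q | IsUnit Q} ∈ nhds a₀ :=
      ((h2.preimage (continuous_snd.comp continuous_fst)).mem_nhds isUnit_one)
    have m3 : (fun x : (Matrix (Fin (m + n*(d-1))) (Fin (m + n*(d-1))) ℂ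
        × Matrix (Fin (n*d)) (Fin (n*d)) ℂ) × Pol d m n => comp m n d x.2) ⁻¹' U ∈ nhds a₀ :=
      (((continuous_comp m n d).comp continuous_snd).continuousAt).preimage_mem_nhds hU
    have := Filter.inter_mem (Filter.inter_mem m1 m2) m3
    refine Filter.mem_of_superset this ?_
    intro x hx
    exact ⟨hx.1.1, hx.1.2, hx.2⟩
  have himg : Fmap m n d '' W ∈ nhds (comp m n d Q₀) := by
    rw [← Fmap_one m n d Q₀]
    convert Filter.image_mem_map (m := Fmap m n d) hW using 1
    exact hmap.symm
  obtain ⟨L', hL'mem⟩ := hQ _ himg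
  obtain ⟨x, hxW, hxF⟩ := hL'mem.1
  refine ⟨comp m n d x.2, hxW.2.2, ?_, ⟨x.2, rfl⟩⟩
  have h5 : StrictEquiv L' (comp m n d x.2) := by
    rw [← hxF]
    exact strictEquiv_conj (compA m n d x.2) (compB m n d x.2) hxW.1 hxW.2.1
  exact StrictEquiv.trans' hL'mem.2 h5


end Analysis

/-- For a matrix polynomial `P` of grade `d`, taking closures in the
space of `(m+n(d−1)) × nd` pencils,
`closure(Orb^e(C¹_P) ∩ GSYL) = closure(Orb^e(C¹_P)) ∩ GSYL`. -/
theorem closure_orbE_inter_GSYL (m n d : ℕ) (hm : 1 ≤ m) (hn : 1 ≤ n) (hd : 1 ≤ d)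
    (P : Pol d m n) :
    closure (orbE (comp m n d P) ∩ GSYL m n d)
      = closure (orbE (comp m n d P)) ∩ GSYL m n d := by
  apply Set.Subset.antisymm
  · refine Set.subset_inter (closure_mono Set.inter_subset_left) ?_
    intro x hx
    have hx2 := closure_mono (Set.inter_subset_right
      (s := orbE (comp m n d P)) (t := GSYL m n d)) hx
    rwa [(isClosed_GSYL m n d).closure_eq] at hx2
  · rintro L ⟨hclos, Q₀, rfl⟩
    exact mem_closure_inter m n d hn hd P Q₀ hclos


end MPoly
end

section
/- Let m, n ≥ 2, d ≥ 1, 1 ≤ r ≤ min{m,n}−1, and 0 ≤ a ≤ rd be integers. Set m₁ = m+n(d−1), n₁ = nd, r₁ = r+n(d−1), and a₁ = r₁ − rd + a. Then 1 ≤ r₁ ≤ min{m₁,n₁}−1 and 0 ≤ a₁ ≤ r₁, and, defining α = ⌊a/(n−r)⌋, s = a mod (n−r), β = ⌊(rd−a)/(m−r)⌋, t = (rd−a) mod (m−r), α₁ = ⌊a₁/(n₁−r₁)⌋, s₁ = a₁ mod (n₁−r₁), β₁ = ⌊(r₁−a₁)/(m₁−r₁)⌋, and t₁ = (r₁−a₁)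 mod (m₁−r₁), the following identities hold: α₁ = α + d − 1, s₁ = s, n₁ − r₁ − s₁ = n − r − s, β₁ = β, t₁ = t, and m₁ − r₁ − t₁ = m − r − t. -/
open Matrix Finset

namespace MPoly

/-- Arithmetic identities matching the Kronecker structure of `C¹_{K_a}`
with the generic rank-`r₁` pencil of size `m₁ × n₁` with parameter `a₁`. -/
theorem parameter_identities (m n d r a : ℕ) (hm : 2 ≤ m) (hn : 2 ≤ n) (hd : 1 ≤ d)
    (hr1 : 1 ≤ r) (hr2 : r ≤ min m n - 1) (ha : a ≤ r * d) :
    (1 ≤ r + n*(d-1) ∧ r + n*(d-1) ≤ min (m + n*(d-1)) (n*d) - 1) ∧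
    ((r + n*(d-1)) - r*d + a ≤ r + n*(d-1)) ∧
    ((r + n*(d-1)) - r*d + a) / (n*d - (r + n*(d-1))) = a / (n-r) + d - 1 ∧
    ((r + n*(d-1)) - r*d + a) % (n*d - (r + n*(d-1))) = a % (n-r) ∧
    (n*d - (r + n*(d-1)) - ((r + n*(d-1)) - r*d + a) % (n*d - (r + n*(d-1)))
      = n - r - a % (n-r)) ∧
    ((r + n*(d-1)) - ((r + n*(d-1)) - r*d + a)) / ((m + n*(d-1)) - (r + n*(d-1)))
      = (r*d - a) / (m-r) ∧
    ((r + n*(d-1)) - ((r + n*(d-1)) - r*d + a)) % ((m + n*(d-1)) - (r + n*(d-1)))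
      = (r*d - a) % (m-r) ∧
    ((m + n*(d-1)) - (r + n*(d-1))
        - ((r + n*(d-1)) - ((r + n*(d-1)) - r*d + a)) % ((m + n*(d-1)) - (r + n*(d-1)))
      = m - r - (r*d - a) % (m-r)) := by
  obtain ⟨k, rfl⟩ : ∃ k, d = k + 1 := ⟨d - 1, by omega⟩
  have hrm : r < m := by omega
  have hrn : r < n := by omega
  have h1 : n * (k+1) = n * k + n := by ring
  have h2 : r * (k+1) = r * k + r := by ring
  have h3 : (n - r) * k = n * k - r * k := by rw [Nat.sub_mul]
  have h4 : r * k ≤ n * k := Nat.mul_le_mul_right k (le_of_lt hrn)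
  simp only [Nat.add_sub_cancel]
  have e1 : n * (k+1) - (r + n * k) = n - r := by omega
  have e2 : (r + n * k) - r * (k+1) + a = a + (n - r) * k := by omega
  have e3 : (r + n * k) - (a + (n - r) * k) = r * (k+1) - a := by omega
  have e4 : (m + n * k) - (r + n * k) = m - r := by omega
  rw [e1, e2, e3, e4]
  refine ⟨⟨by omega, by omega⟩, by omega, ?_, ?_, ?_, rfl, rfl, rfl⟩
  · rw [Nat.add_mul_div_left _ _ (by omega : 0 < n - r), Nat.add_succ, Nat.succ_sub_one]
  · exact Nat.add_mul_mod_self_left a (n - r) k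
  · rw [Nat.add_mul_mod_self_left]

end MPoly
end

section
/- Let m, n ≥ 2, d ≥ 1, and 1 ≤ r ≤ min{m,n}−1 be integers, and let a, a' be integers with 0 ≤ a, a' ≤ rd and a ≠ a'. Then closure(Orb^e(G_a)) ∩ Orb^e(G_{a'}) = ∅, where the closure is taken in the metric space of (m+n(d−1)) × nd matrix pencils. -/
open Matrix Finset

namespace MPoly

namespace Sep

open Module Submodule

/-! ### Extension-by-zero helpers -/

noncomputable def exv {q : ℕ} (v : Fin q → ℂ) : ℕ → ℂ :=
  fun c => if h : c < q then v ⟨c, h⟩ else 0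

noncomputable def ex {k q : ℕ} (x : Fin k → Fin q → ℂ) : ℕ → ℕ → ℂ :=
  fun j c => if h : j < k then exv (x ⟨j, h⟩) c else 0

lemma ex_big {k q : ℕ} (x : Fin k → Fin q → ℂ) {j : ℕ} (h : k ≤ j) (c : ℕ) :
    ex x j c = 0 := by
  simp only [ex]; rw [dif_neg (by omega)]

lemma ex_lt {k q : ℕ} (x : Fin k → Fin q → ℂ) {j c : ℕ} (h1 : j < k) (h2 : c < q) :
    ex x j c = x ⟨j, h1⟩ ⟨c, h2⟩ := by
  simp only [ex, exv]; rw [dif_pos h1, dif_pos h2]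

lemma ex_zero {k q : ℕ} (j c : ℕ) : ex (0 : Fin k → Fin q → ℂ) j c = 0 := by
  simp only [ex, exv]
  split_ifs <;> simp

/-! ### The block-Toeplitz linear map of a pencil -/

noncomputable def Sk (k : ℕ) {p q : ℕ} (L : Pencil p q) :
    (Fin k → Fin q → ℂ) →ₗ[ℂ] (Fin (k+1) → Fin p → ℂ) where
  toFun x := fun j =>
    (if h : (j : ℕ) < k then L.2 *ᵥ x ⟨(j : ℕ), h⟩ else 0)
    + (if h : 0 < (j : ℕ) then L.1 *ᵥ x ⟨(j : ℕ) - 1, by have := j.isLt; omega⟩ else 0)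
  map_add' x y := by
    funext j i
    by_cases h1 : (j:ℕ) < k <;> by_cases h2 : 0 < (j:ℕ) <;>
      simp [h1, h2, Matrix.mulVec_add, -Fin.val_pos_iff] <;> ring
  map_smul' c x := by
    funext j i
    by_cases h1 : (j:ℕ) < k <;> by_cases h2 : 0 < (j:ℕ) <;>
      simp [h1, h2, Matrix.mulVec_smul, -Fin.val_pos_iff] <;> ring

lemma Sk_apply (k : ℕ) {p q : ℕ} (L : Pencil p q) (x : Fin k → Fin q → ℂ) (j : Fin (k+1)) :
    Sk k L x j = (if h : (j : ℕ) < k then L.2 *ᵥ x ⟨(j : ℕ), h⟩ else 0)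
    + (if h : 0 < (j : ℕ) then L.1 *ᵥ x ⟨(j : ℕ) - 1, by have := j.isLt; omega⟩ else 0) := rfl

noncomputable def nu (k : ℕ) {p q : ℕ} (L : Pencil p q) : ℕ :=
  finrank ℂ (LinearMap.ker (Sk k L))

/-! ### Invariance of `nu` under strict equivalence -/

lemma nu_strictEquiv (k : ℕ) {p q : ℕ} {L M : Pencil p q} (h : StrictEquiv L M) :
    nu k L = nu k M := by
  obtain ⟨Q, R, hQ, hR, hA, hB⟩ := h
  have hRd : IsUnit R.det := (Matrix.isUnit_iff_isUnit_det R).mp hR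
  letI iR : Invertible R := R.invertibleOfIsUnitDet hRd
  set eR : (Fin k → Fin q → ℂ) ≃ₗ[ℂ] (Fin k → Fin q → ℂ) :=
    LinearEquiv.piCongrRight (fun _ : Fin k => R.toLinearEquiv' iR) with heRdef
  have heR : ∀ (x : Fin k → Fin q → ℂ) (l : Fin k), eR x l = R *ᵥ x l := by
    intro x l
    simp [heRdef, Matrix.toLinearEquiv', Matrix.toLin'_apply]
  have hQ' : IsUnit Q⁻¹ := Matrix.isUnit_nonsing_inv_iff.mpr hQ
  have hQinj : Function.Injective (fun v : Fin p → ℂ => Q⁻¹ *ᵥ v) :=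
    Matrix.mulVec_injective_iff_isUnit.mpr hQ'
  have key : ∀ (x : Fin k → Fin q → ℂ) (j : Fin (k+1)),
      Sk k M x j = Q⁻¹ *ᵥ (Sk k (L.1, L.2) (eR x) j) := by
    intro x j
    rw [Sk_apply, Sk_apply]
    have e2 : M.2 = Q⁻¹ * L.2 * R := hB.symm
    have e1 : M.1 = Q⁻¹ * L.1 * R := hA.symm
    by_cases h1 : (j:ℕ) < k <;> by_cases h2 : 0 < (j:ℕ) <;>
      simp [h1, h2, e1, e2, heR, Matrix.mulVec_add, ← Matrix.mulVec_mulVec]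
  have hker : LinearMap.ker (Sk k M) =
      Submodule.comap (eR : (Fin k → Fin q → ℂ) →ₗ[ℂ] (Fin k → Fin q → ℂ))
        (LinearMap.ker (Sk k L)) := by
    ext x
    simp only [LinearMap.mem_ker, Submodule.mem_comap, LinearEquiv.coe_coe]
    constructor
    · intro hx
      funext j
      apply hQinj
      have := congrFun hx j
      rw [key] at this
      simpa using this
    · intro hx
      funext j
      rw [key]
      have : Sk k (L.1, L.2) (eR x) = 0 := hx
      rw [this]
      simp
  rw [nu, nu, hker]
  exact (LinearEquiv.finrank_eq (eR.ofSubmodule' (LinearMap.ker (Sk k L)))).symm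

/-! ### Matrix of `Sk` and lower semicontinuity of rank -/

noncomputable def bDom (k q : ℕ) : Basis ((_ : Fin k) × Fin q) ℂ (Fin k → Fin q → ℂ) :=
  Pi.basis fun _ => Pi.basisFun ℂ (Fin q)

noncomputable def matS (k : ℕ) {p q : ℕ} (L : Pencil p q) :
    Matrix ((_ : Fin (k+1)) × Fin p) ((_ : Fin k) × Fin q) ℂ :=
  LinearMap.toMatrix (bDom k q) (bDom (k+1) p) (Sk k L)

lemma rank_matS (k : ℕ) {p q : ℕ} (L : Pencil p q) :
    (matS k L).rank = finrank ℂ (LinearMap.range (Sk k L)) := by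
  rw [matS, Matrix.rank_eq_finrank_range_toLin _ (bDom (k+1) p) (bDom k q),
    Matrix.toLin_toMatrix]

lemma matS_apply (k : ℕ) {p q : ℕ} (L : Pencil p q) (ji : (_ : Fin (k+1)) × Fin p)
    (ly : (_ : Fin k) × Fin q) :
    matS k L ji ly = (if (ji.1 : ℕ) = (ly.1 : ℕ) then L.2 ji.2 ly.2 else 0)
      + (if (ji.1 : ℕ) = (ly.1 : ℕ) + 1 then L.1 ji.2 ly.2 else 0) := by
  obtain ⟨j, i⟩ := ji; obtain ⟨l, y⟩ := ly
  rw [matS, LinearMap.toMatrix_apply]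
  simp only [bDom, Pi.basis_apply, Pi.basisFun_apply, Pi.basis_repr, Pi.basisFun_repr]
  rw [Sk_apply]
  simp only [Pi.add_apply]
  congr 1
  · by_cases h1 : (j:ℕ) < k
    · rw [dif_pos h1, Pi.single_apply]
      by_cases h2 : (⟨(j:ℕ), h1⟩ : Fin k) = l
      · rw [if_pos h2, Matrix.mulVec_single, if_pos (by rw [← h2])]
        simp
      · rw [if_neg h2, if_neg (by simp [Fin.ext_iff] at h2 ⊢; omega), Matrix.mulVec_zero]
        simp
    · rw [dif_neg h1, if_neg (by have := l.isLt; omega)]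
      simp
  · by_cases h1 : 0 < (j:ℕ)
    · rw [dif_pos h1, Pi.single_apply]
      by_cases h2 : (⟨(j:ℕ) - 1, by have := j.isLt; omega⟩ : Fin k) = l
      · rw [if_pos h2, Matrix.mulVec_single, if_pos (by simp [Fin.ext_iff] at h2; omega)]
        simp
      · rw [if_neg h2, if_neg (by simp [Fin.ext_iff] at h2 ⊢; omega), Matrix.mulVec_zero]
        simp
    · rw [dif_neg h1, if_neg (by omega)]
      simp

lemma continuous_matS (k p q : ℕ) : Continuous fun L : Pencil p q => matS k L := by
  apply continuous_matrix
  intro ji ly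
  simp only [matS_apply]
  apply Continuous.add
  · by_cases h : (ji.1 : ℕ) = (ly.1 : ℕ)
    · simp only [if_pos h]
      exact (continuous_snd.matrix_elem _ _)
    · simp only [if_neg h]
      exact continuous_const
  · by_cases h : (ji.1 : ℕ) = (ly.1 : ℕ) + 1
    · simp only [if_pos h]
      exact (continuous_fst.matrix_elem _ _)
    · simp only [if_neg h]
      exact continuous_const

lemma exists_indep_family {ι : Type} [Fintype ι] {V : Type} [AddCommGroup V] [Module ℂ V]
    [FiniteDimensional ℂ V] (v : ι → V) (s : ℕ)
    (h : s ≤ finrank ℂ (span ℂ (Set.range v))) :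
    ∃ g : Fin s → ι, LinearIndependent ℂ (v ∘ g) := by
  obtain ⟨bs, hbsub, hbspan, hbind⟩ := exists_linearIndependent ℂ (Set.range v)
  have hfin : bs.Finite := (Set.finite_range v).subset hbsub
  haveI := hfin.fintype
  have hcard : s ≤ hfin.toFinset.card := by
    have he : finrank ℂ (span ℂ bs) = bs.toFinset.card := finrank_span_set_eq_card hbind
    have he2 : bs.toFinset = hfin.toFinset := by
      ext z; simp
    rw [hbspan, he2] at he
    omega
  obtain ⟨t, hts, htcard⟩ := Finset.exists_subset_card_eq hcard
  have e : Fin s ≃ {z // z ∈ t} := (t.equivFinOfCardEq htcard).symm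
  have hmem : ∀ z : {z // z ∈ t}, (z : V) ∈ Set.range v := by
    intro z
    exact hbsub (by simpa using hts z.2)
  choose g hg using fun z => hmem z
  refine ⟨fun a => g (e a), ?_⟩
  have hsub : (↑t : Set V) ⊆ bs := by
    intro z hz
    simpa using hts (by simpa using hz)
  have hind : LinearIndependent ℂ (fun z : {z // z ∈ t} => (z : V)) :=
    (show LinearIndepOn ℂ id bs from hbind).mono hsub
  have : (v ∘ fun a => g (e a)) = fun a => ((e a : V)) := by
    funext a; simp [hg]
  rw [this]
  exact hind.comp e e.injective

lemma rank_submatrix_le' {I J : Type} [Fintype I] [Fintype J] {s : ℕ}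
    (X : Matrix I J ℂ) (f : Fin s → I) (g : Fin s → J) :
    (X.submatrix f g).rank ≤ X.rank := by
  rw [Matrix.rank_eq_finrank_span_cols, Matrix.rank_eq_finrank_span_cols]
  have hsub : Set.range (X.submatrix f g)ᵀ =
      (LinearMap.funLeft ℂ ℂ f) '' (Set.range (Xᵀ ∘ g)) := by
    ext w
    constructor
    · rintro ⟨a, rfl⟩
      exact ⟨Xᵀ (g a), ⟨a, rfl⟩, rfl⟩
    · rintro ⟨u, ⟨a, rfl⟩, rfl⟩
      exact ⟨a, rfl⟩
  change finrank ℂ (span ℂ (Set.range (X.submatrix f g)ᵀ)) ≤ finrank ℂ (span ℂ (Set.range Xᵀ))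
  rw [hsub, Submodule.span_image]
  refine le_trans (Submodule.finrank_map_le _ _) ?_
  exact Submodule.finrank_mono (Submodule.span_mono (Set.range_comp_subset_range _ _))

lemma exists_unit_submatrix {I J : Type} [Fintype I] [Fintype J] [DecidableEq I] [DecidableEq J]
    (X : Matrix I J ℂ) {s : ℕ} (h : s ≤ X.rank) :
    ∃ (f : Fin s → I) (g : Fin s → J), IsUnit (X.submatrix f g) := by
  have hc : s ≤ finrank ℂ (span ℂ (Set.range Xᵀ)) := by
    exact h.trans (Matrix.rank_eq_finrank_span_cols X).le
  obtain ⟨g, hg⟩ := exists_indep_family Xᵀ s hc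
  set Y : Matrix I (Fin s) ℂ := X.submatrix id g with hY
  have hYt : Yᵀ = Xᵀ ∘ g := rfl
  have hYrank : Y.rank = s := by
    rw [Matrix.rank_eq_finrank_span_cols]
    change finrank ℂ (span ℂ (Set.range Yᵀ)) = s
    rw [hYt, finrank_span_eq_card hg, Fintype.card_fin]
  have hrows : s ≤ finrank ℂ (span ℂ (Set.range (fun i : I => Y i))) := by
    have : Yᵀᵀ = fun i : I => Y i := by
      funext i; rfl
    rw [← this]
    change s ≤ finrank ℂ (span ℂ (Set.range (Yᵀ).col))
    rw [← Matrix.rank_eq_finrank_span_cols, Matrix.rank_transpose, hYrank]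
  obtain ⟨f, hf⟩ := exists_indep_family (fun i : I => Y i) s hrows
  refine ⟨f, g, ?_⟩
  rw [← Matrix.linearIndependent_rows_iff_isUnit]
  exact hf

lemma isClosed_rank_le {I J : Type} [Fintype I] [Fintype J] [DecidableEq I] [DecidableEq J]
    (R : ℕ) : IsClosed {X : Matrix I J ℂ | X.rank ≤ R} := by
  rw [← isOpen_compl_iff]
  have hset : {X : Matrix I J ℂ | X.rank ≤ R}ᶜ =
      ⋃ (f : Fin (R+1) → I) (g : Fin (R+1) → J), {X : Matrix I J ℂ | (X.submatrix f g).det ≠ 0} := by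
    ext X
    simp only [Set.mem_compl_iff, Set.mem_setOf_eq, not_le, Set.mem_iUnion]
    constructor
    · intro hX
      obtain ⟨f, g, hu⟩ := exists_unit_submatrix X (show R+1 ≤ X.rank from hX)
      refine ⟨f, g, ?_⟩
      have := (Matrix.isUnit_iff_isUnit_det _).mp hu
      exact IsUnit.ne_zero this
    · rintro ⟨f, g, hu⟩
      have h1 : (X.submatrix f g).rank = R+1 := by
        rw [Matrix.rank_of_isUnit _ ((Matrix.isUnit_iff_isUnit_det _).mpr (isUnit_iff_ne_zero.mpr hu))]
        simp
      have h2 := rank_submatrix_le' X f g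
      omega
  rw [hset]
  refine isOpen_iUnion fun f => isOpen_iUnion fun g => ?_
  have hcont : Continuous fun X : Matrix I J ℂ => (X.submatrix f g).det :=
    (continuous_id.matrix_submatrix f g).matrix_det
  exact isOpen_compl_singleton.preimage hcont
/-! ### Semicontinuity of `nu` on orbit closures, and transposes -/

lemma nu_le_of_mem_closure (k : ℕ) {p q : ℕ} {L F : Pencil p q}
    (hF : F ∈ closure (orbE L)) : nu k L ≤ nu k F := by
  have hkey : ∀ M : Pencil p q, ((matS k M).rank ≤ (matS k L).rank ↔ nu k L ≤ nu k M) := by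
    intro M
    have e1 := LinearMap.finrank_range_add_finrank_ker (Sk k L)
    have e2 := LinearMap.finrank_range_add_finrank_ker (Sk k M)
    rw [rank_matS, rank_matS]
    unfold nu
    omega
  have hC : IsClosed {M : Pencil p q | (matS k M).rank ≤ (matS k L).rank} :=
    (isClosed_rank_le ((matS k L).rank)).preimage (continuous_matS k p q)
  have hsub : orbE L ⊆ {M : Pencil p q | (matS k M).rank ≤ (matS k L).rank} := by
    intro M hM
    have h2 : nu k L = nu k M := nu_strictEquiv k hM
    exact (hkey M).mpr (le_of_eq h2)
  exact (hkey F).mp (closure_minimal hsub hC hF)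

/-- the transposed pencil -/
noncomputable def tp {p q : ℕ} (L : Pencil p q) : Pencil q p := (L.1ᵀ, L.2ᵀ)

lemma strictEquiv_tp {p q : ℕ} {L M : Pencil p q} (h : StrictEquiv L M) :
    StrictEquiv (tp L) (tp M) := by
  obtain ⟨Q, R, hQ, hR, hA, hB⟩ := h
  have hRT : IsUnit Rᵀ := (Matrix.isUnit_transpose (A := R)).mpr hR
  have hQT : IsUnit Qᵀ := (Matrix.isUnit_transpose (A := Q)).mpr hQ
  refine ⟨(Rᵀ)⁻¹, (Qᵀ)⁻¹, Matrix.isUnit_nonsing_inv_iff.mpr hRT,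
    Matrix.isUnit_nonsing_inv_iff.mpr hQT, ?_, ?_⟩
  · rw [Matrix.nonsing_inv_nonsing_inv _ ((Matrix.isUnit_iff_isUnit_det _).mp hRT)]
    show Rᵀ * (tp L).1 * (Qᵀ)⁻¹ = (tp M).1
    rw [tp, tp, ← hA]
    simp only [Matrix.transpose_mul, ← Matrix.transpose_nonsing_inv]
    rw [Matrix.mul_assoc]
  · rw [Matrix.nonsing_inv_nonsing_inv _ ((Matrix.isUnit_iff_isUnit_det _).mp hRT)]
    show Rᵀ * (tp L).2 * (Qᵀ)⁻¹ = (tp M).2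
    rw [tp, tp, ← hB]
    simp only [Matrix.transpose_mul, ← Matrix.transpose_nonsing_inv]
    rw [Matrix.mul_assoc]

lemma mem_closure_tp {p q : ℕ} {L F : Pencil p q} (h : F ∈ closure (orbE L)) :
    tp F ∈ closure (orbE (tp L)) := by
  have hc : Continuous (tp : Pencil p q → Pencil q p) :=
    Continuous.prodMk (continuous_fst.matrix_transpose) (continuous_snd.matrix_transpose)
  have h1 : tp F ∈ tp '' closure (orbE L) := ⟨F, h, rfl⟩
  have h2 : tp F ∈ closure (tp '' orbE L) := image_closure_subset_closure_image hc h1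
  refine closure_mono ?_ h2
  rintro _ ⟨M, hM, rfl⟩
  exact strictEquiv_tp hM
/-! ### Block offsets -/

lemma off_zero (sz : ℕ → ℕ) : off sz 0 = 0 := rfl

lemma off_succ (sz : ℕ → ℕ) (b : ℕ) : off sz (b+1) = off sz b + sz b :=
  Finset.sum_range_succ _ _

lemma off_mono (sz : ℕ → ℕ) {b b' : ℕ} (h : b ≤ b') : off sz b ≤ off sz b' :=
  Finset.sum_le_sum_of_subset (Finset.range_subset_range.mpr h)

lemma off_block_le (sz : ℕ → ℕ) {b N : ℕ} (h : b < N) : off sz b + sz b ≤ off sz N := by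
  rw [← off_succ]; exact off_mono sz h

lemma exists_block (sz : ℕ → ℕ) {N y : ℕ} (hy : y < off sz N) :
    ∃ b, b < N ∧ off sz b ≤ y ∧ y < off sz b + sz b := by
  induction N with
  | zero => simp [off] at hy
  | succ N ih =>
    by_cases hN : y < off sz N
    · obtain ⟨b, h1, h2, h3⟩ := ih hN
      exact ⟨b, by omega, h2, h3⟩
    · rw [off_succ] at hy
      exact ⟨N, by omega, by omega, by omega⟩

lemma block_eq (sz : ℕ → ℕ) {b b' y : ℕ}
    (h1 : off sz b ≤ y) (h2 : y < off sz b + sz b)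
    (h1' : off sz b' ≤ y) (h2' : y < off sz b' + sz b') : b = b' := by
  by_contra hne
  rcases Nat.lt_or_ge b b' with hlt | hge
  · have e1 : off sz b + sz b = off sz (b+1) := (off_succ _ _).symm
    have e2 := off_mono sz (show b+1 ≤ b' by omega)
    omega
  · have e1 : off sz b' + sz b' = off sz (b'+1) := (off_succ _ _).symm
    have e2 := off_mono sz (show b'+1 ≤ b by omega)
    omega

lemma dsum_row (N : ℕ) (ρ γ : ℕ → ℕ) (ent : ℕ → ℕ → ℕ → ℂ) (p q : ℕ) {b l : ℕ}
    (hb : b < N) (hl : l < ρ b) (hrow : off ρ b + l < p) (y : Fin q) :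
    dsum N ρ γ ent p q ⟨off ρ b + l, hrow⟩ y =
      if off γ b ≤ (y : ℕ) ∧ (y : ℕ) < off γ b + γ b then ent b l ((y : ℕ) - off γ b) else 0 := by
  simp only [dsum]
  rw [Finset.sum_eq_single b]
  · by_cases hc : off γ b ≤ (y : ℕ) ∧ (y : ℕ) < off γ b + γ b
    · rw [if_pos ⟨by omega, by omega, hc.1, hc.2⟩, if_pos hc]
      congr 1
      omega
    · rw [if_neg (by tauto), if_neg hc]
  · intro b' _ hne
    rw [if_neg]
    rintro ⟨d1, d2, _, _⟩
    exact hne (block_eq ρ d1 d2 (by omega) (by omega))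
  · intro hmem
    exact absurd (Finset.mem_range.mpr hb) hmem

/-! ### The structured block pencil -/

def rho (fl : ℕ → Bool) (sz : ℕ → ℕ) : ℕ → ℕ := fun b => if fl b then sz b else sz b + 1

def gam (fl : ℕ → Bool) (sz : ℕ → ℕ) : ℕ → ℕ := fun b => if fl b then sz b + 1 else sz b

noncomputable def BP (N : ℕ) (fl : ℕ → Bool) (sz : ℕ → ℕ) (p q : ℕ) : Pencil p q :=
  (dsum N (rho fl sz) (gam fl sz) (fun _ i j => if i = j then (1:ℂ) else 0) p q,
   dsum N (rho fl sz) (gam fl sz)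
     (fun b i j => if fl b then (if j = i+1 then (1:ℂ) else 0)
       else (if i = j+1 then (1:ℂ) else 0)) p q)

section BPlemmas

variable {k N p q : ℕ} {fl : ℕ → Bool} {sz : ℕ → ℕ}
variable (hp : off (rho fl sz) N = p) (hq : off (gam fl sz) N = q)

lemma sum_indicator {q : ℕ} (c : ℕ) (hc : c < q) (f v : Fin q → ℂ)
    (hf : ∀ y : Fin q, f y = if (y:ℕ) = c then 1 else 0) :
    (∑ y, f y * v y) = v ⟨c, hc⟩ := by
  rw [Finset.sum_eq_single (⟨c, hc⟩ : Fin q)]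
  · rw [hf]; simp
  · intro y _ hy
    rw [hf, if_neg (fun hyc => hy (Fin.ext hyc)), zero_mul]
  · intro hmem
    exact absurd (Finset.mem_univ _) hmem

include hq in
lemma BP_A_mulVec {b l : ℕ} (hb : b < N) (hl : l < rho fl sz b)
    (hrow : off (rho fl sz) b + l < p) (v : Fin q → ℂ) :
    ((BP N fl sz p q).1 *ᵥ v) ⟨off (rho fl sz) b + l, hrow⟩ =
      if l < gam fl sz b then exv v (off (gam fl sz) b + l) else 0 := by
  show (∑ y, (BP N fl sz p q).1 ⟨off (rho fl sz) b + l, hrow⟩ y * v y) = _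
  by_cases hlg : l < gam fl sz b
  · have hc : off (gam fl sz) b + l < q := by
      have := off_block_le (gam fl sz) hb; omega
    rw [if_pos hlg, sum_indicator (off (gam fl sz) b + l) hc _ v]
    · simp only [exv]; rw [dif_pos hc]
    · intro y
      rw [show (BP N fl sz p q).1 = dsum N (rho fl sz) (gam fl sz)
          (fun _ i j => if i = j then (1:ℂ) else 0) p q from rfl,
        dsum_row N _ _ _ p q hb hl hrow y]
      by_cases hy : (y:ℕ) = off (gam fl sz) b + l
      · rw [if_pos (by omega), if_pos (by omega), if_pos hy]
      · by_cases hy2 : off (gam fl sz) b ≤ (y:ℕ) ∧ (y:ℕ) < off (gam fl sz) b + gam fl sz b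
        · rw [if_pos hy2, if_neg (by omega), if_neg hy]
        · rw [if_neg hy2, if_neg hy]
  · rw [if_neg hlg]
    apply Finset.sum_eq_zero
    intro y _
    rw [show (BP N fl sz p q).1 = dsum N (rho fl sz) (gam fl sz)
        (fun _ i j => if i = j then (1:ℂ) else 0) p q from rfl,
      dsum_row N _ _ _ p q hb hl hrow y]
    by_cases hy2 : off (gam fl sz) b ≤ (y:ℕ) ∧ (y:ℕ) < off (gam fl sz) b + gam fl sz b
    · rw [if_pos hy2, if_neg (by omega), zero_mul]
    · rw [if_neg hy2, zero_mul]

include hq in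
lemma BP_B_mulVec_fl {b l : ℕ} (hfl : fl b = true) (hb : b < N) (hl : l < rho fl sz b)
    (hrow : off (rho fl sz) b + l < p) (v : Fin q → ℂ) :
    ((BP N fl sz p q).2 *ᵥ v) ⟨off (rho fl sz) b + l, hrow⟩ =
      exv v (off (gam fl sz) b + l + 1) := by
  show (∑ y, (BP N fl sz p q).2 ⟨off (rho fl sz) b + l, hrow⟩ y * v y) = _
  have hlsz : l < sz b := by simpa [rho, hfl] using hl
  have hg : gam fl sz b = sz b + 1 := by simp [gam, hfl]
  have hc : off (gam fl sz) b + l + 1 < q := by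
    have := off_block_le (gam fl sz) hb; omega
  rw [sum_indicator (off (gam fl sz) b + l + 1) hc _ v]
  · simp only [exv]; rw [dif_pos hc]
  · intro y
    rw [show (BP N fl sz p q).2 = dsum N (rho fl sz) (gam fl sz)
        (fun b i j => if fl b then (if j = i+1 then (1:ℂ) else 0)
          else (if i = j+1 then (1:ℂ) else 0)) p q from rfl,
      dsum_row N _ _ _ p q hb hl hrow y]
    simp only [hfl, if_true]
    by_cases hy : (y:ℕ) = off (gam fl sz) b + l + 1
    · rw [if_pos (by omega), if_pos (by omega), if_pos hy]
    · by_cases hy2 : off (gam fl sz) b ≤ (y:ℕ) ∧ (y:ℕ) < off (gam fl sz) b + gam fl sz b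
      · rw [if_pos hy2, if_neg (by omega), if_neg hy]
      · rw [if_neg hy2, if_neg hy]

include hq in
lemma BP_B_mulVec_nfl {b l : ℕ} (hfl : fl b = false) (hb : b < N) (hl : l < rho fl sz b)
    (hrow : off (rho fl sz) b + l < p) (v : Fin q → ℂ) :
    ((BP N fl sz p q).2 *ᵥ v) ⟨off (rho fl sz) b + l, hrow⟩ =
      if 1 ≤ l then exv v (off (gam fl sz) b + (l - 1)) else 0 := by
  show (∑ y, (BP N fl sz p q).2 ⟨off (rho fl sz) b + l, hrow⟩ y * v y) = _
  have hlsz : l < sz b + 1 := by simpa [rho, hfl] using hl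
  have hg : gam fl sz b = sz b := by simp [gam, hfl]
  by_cases hl1 : 1 ≤ l
  · have hc : off (gam fl sz) b + (l - 1) < q := by
      have := off_block_le (gam fl sz) hb; omega
    rw [if_pos hl1, sum_indicator (off (gam fl sz) b + (l - 1)) hc _ v]
    · simp only [exv]; rw [dif_pos hc]
    · intro y
      rw [show (BP N fl sz p q).2 = dsum N (rho fl sz) (gam fl sz)
          (fun b i j => if fl b then (if j = i+1 then (1:ℂ) else 0)
            else (if i = j+1 then (1:ℂ) else 0)) p q from rfl,
        dsum_row N _ _ _ p q hb hl hrow y]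
      simp only [hfl, Bool.false_eq_true, if_false]
      by_cases hy : (y:ℕ) = off (gam fl sz) b + (l - 1)
      · rw [if_pos (by omega), if_pos (by omega), if_pos hy]
      · by_cases hy2 : off (gam fl sz) b ≤ (y:ℕ) ∧ (y:ℕ) < off (gam fl sz) b + gam fl sz b
        · rw [if_pos hy2, if_neg (by omega), if_neg hy]
        · rw [if_neg hy2, if_neg hy]
  · rw [if_neg hl1]
    apply Finset.sum_eq_zero
    intro y _
    rw [show (BP N fl sz p q).2 = dsum N (rho fl sz) (gam fl sz)
        (fun b i j => if fl b then (if j = i+1 then (1:ℂ) else 0)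
          else (if i = j+1 then (1:ℂ) else 0)) p q from rfl,
      dsum_row N _ _ _ p q hb hl hrow y]
    simp only [hfl, Bool.false_eq_true, if_false]
    by_cases hy2 : off (gam fl sz) b ≤ (y:ℕ) ∧ (y:ℕ) < off (gam fl sz) b + gam fl sz b
    · rw [if_pos hy2, if_neg (by omega), zero_mul]
    · rw [if_neg hy2, zero_mul]

include hq in
lemma Sk_BP_fl {b l j : ℕ} (hfl : fl b = true) (hb : b < N) (hl : l < rho fl sz b) (hj : j ≤ k)
    (x : Fin k → Fin q → ℂ) (hrow : off (rho fl sz) b + l < p) :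
    Sk k (BP N fl sz p q) x ⟨j, by omega⟩ ⟨off (rho fl sz) b + l, hrow⟩ =
      ex x j (off (gam fl sz) b + l + 1)
        + (if 1 ≤ j then ex x (j-1) (off (gam fl sz) b + l) else 0) := by
  have happ := congrFun (Sk_apply k (BP N fl sz p q) x ⟨j, by omega⟩)
    ⟨off (rho fl sz) b + l, hrow⟩
  rw [happ, Pi.add_apply]
  have hlsz : l < sz b := by simpa [rho, hfl] using hl
  have hg : gam fl sz b = sz b + 1 := by simp [gam, hfl]
  congr 1
  · by_cases hjk : j < k
    · rw [dif_pos hjk]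
      rw [BP_B_mulVec_fl hq hfl hb hl hrow]
      simp only [ex]
      rw [dif_pos hjk]
    · rw [dif_neg hjk]
      simp only [Pi.zero_apply]
      rw [ex_big x (by omega)]
  · by_cases hj1 : 0 < j
    · rw [dif_pos hj1, if_pos (show 1 ≤ j by omega)]
      rw [BP_A_mulVec hq hb hl hrow]
      rw [if_pos (by omega)]
      simp only [ex]
      rw [dif_pos (show j - 1 < k by omega)]
    · rw [dif_neg hj1, if_neg (by omega)]
      simp

end BPlemmas
section BPlemmas2

variable {k N p q : ℕ} {fl : ℕ → Bool} {sz : ℕ → ℕ}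
variable (hp : off (rho fl sz) N = p) (hq : off (gam fl sz) N = q)

include hq in
lemma Sk_BP_nfl {b l j : ℕ} (hfl : fl b = false) (hb : b < N) (hl : l < rho fl sz b) (hj : j ≤ k)
    (x : Fin k → Fin q → ℂ) (hrow : off (rho fl sz) b + l < p) :
    Sk k (BP N fl sz p q) x ⟨j, by omega⟩ ⟨off (rho fl sz) b + l, hrow⟩ =
      (if 1 ≤ l then ex x j (off (gam fl sz) b + (l-1)) else 0)
        + (if 1 ≤ j ∧ l < sz b then ex x (j-1) (off (gam fl sz) b + l) else 0) := by
  have happ := congrFun (Sk_apply k (BP N fl sz p q) x ⟨j, by omega⟩)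
    ⟨off (rho fl sz) b + l, hrow⟩
  rw [happ, Pi.add_apply]
  have hlsz : l < sz b + 1 := by simpa [rho, hfl] using hl
  have hg : gam fl sz b = sz b := by simp [gam, hfl]
  congr 1
  · by_cases hjk : j < k
    · rw [dif_pos hjk]
      rw [BP_B_mulVec_nfl hq hfl hb hl hrow]
      by_cases hl1 : 1 ≤ l
      · rw [if_pos hl1, if_pos hl1]
        simp only [ex]
        rw [dif_pos hjk]
      · rw [if_neg hl1, if_neg hl1]
    · rw [dif_neg hjk]
      simp only [Pi.zero_apply]
      by_cases hl1 : 1 ≤ l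
      · rw [if_pos hl1, ex_big x (by omega)]
      · rw [if_neg hl1]
  · by_cases hj1 : 0 < j
    · rw [dif_pos hj1]
      rw [BP_A_mulVec hq hb hl hrow]
      by_cases hls : l < sz b
      · rw [if_pos (by omega), if_pos ⟨by omega, hls⟩]
        simp only [ex]
        rw [dif_pos (show j - 1 < k by omega)]
      · rw [if_neg (by omega), if_neg (by rintro ⟨_, h2⟩; omega)]
    · rw [dif_neg hj1, if_neg (by rintro ⟨h1, _⟩; omega)]
      simp

include hp hq in
lemma mem_ker_BP (x : Fin k → Fin q → ℂ) :
    x ∈ LinearMap.ker (Sk k (BP N fl sz p q)) ↔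
      (∀ b l j, b < N → l < rho fl sz b → j ≤ k →
        (if fl b then
          ex x j (off (gam fl sz) b + l + 1)
            + (if 1 ≤ j then ex x (j-1) (off (gam fl sz) b + l) else 0)
         else
          (if 1 ≤ l then ex x j (off (gam fl sz) b + (l-1)) else 0)
            + (if 1 ≤ j ∧ l < sz b then ex x (j-1) (off (gam fl sz) b + l) else 0)) = 0) := by
  rw [LinearMap.mem_ker]
  constructor
  · intro hx b l j hb hl hj
    have hrow : off (rho fl sz) b + l < p := by
      have := off_block_le (rho fl sz) hb; omega
    cases hfl : fl b
    · rw [if_neg (by simp [hfl])]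
      rw [← Sk_BP_nfl hq hfl hb hl hj x hrow, hx]
      simp
    · rw [if_pos (by simp [hfl])]
      rw [← Sk_BP_fl hq hfl hb hl hj x hrow, hx]
      simp
  · intro hE
    funext j i
    obtain ⟨b, hb, h1, h2⟩ := exists_block (rho fl sz)
      (show (i:ℕ) < off (rho fl sz) N from by rw [hp]; exact i.isLt)
    have hi : i = ⟨off (rho fl sz) b + ((i:ℕ) - off (rho fl sz) b), by omega⟩ :=
      Fin.ext (by simp; omega)
    have hjj : j = ⟨(j:ℕ), j.isLt⟩ := Fin.ext rfl
    have hjk : (j:ℕ) ≤ k := by omega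
    have hl : (i:ℕ) - off (rho fl sz) b < rho fl sz b := by omega
    rw [hjj, hi]
    cases hfl : fl b
    · rw [Sk_BP_nfl hq hfl hb hl hjk x _]
      have := hE b ((i:ℕ) - off (rho fl sz) b) (j:ℕ) hb hl hjk
      rw [if_neg (by simp [hfl])] at this
      rw [this]
      simp
    · rw [Sk_BP_fl hq hfl hb hl hjk x _]
      have := hE b ((i:ℕ) - off (rho fl sz) b) (j:ℕ) hb hl hjk
      rw [if_pos (by simp [hfl])] at this
      rw [this]
      simp

end BPlemmas2
section KerUpper

variable {k N p q : ℕ} {fl : ℕ → Bool} {sz : ℕ → ℕ}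
variable (hp : off (rho fl sz) N = p) (hq : off (gam fl sz) N = q)

include hp hq in
lemma ker_psi_zero (hk : ∀ b, b < N → fl b = true → sz b ≤ k)
    (x : Fin k → Fin q → ℂ) (hx : x ∈ LinearMap.ker (Sk k (BP N fl sz p q)))
    (hpsi : ∀ b, b < N → fl b = true → ∀ j, j < k - sz b → ex x j (off (gam fl sz) b) = 0) :
    x = 0 := by
  have hE := (mem_ker_BP hp hq x).mp hx
  funext j y
  suffices h : ex x (j:ℕ) ((y:ℕ)) = 0 by
    rw [ex_lt x j.isLt y.isLt] at h
    simpa using h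
  obtain ⟨b, hb, hy1, hy2⟩ := exists_block (gam fl sz)
    (show (y:ℕ) < off (gam fl sz) N from by rw [hq]; exact y.isLt)
  set c := off (gam fl sz) b with hc
  cases hfl : fl b
  · -- left-type block: everything vanishes
    have hg : gam fl sz b = sz b := by simp [gam, hfl]
    have E2 : ∀ j l, l < sz b + 1 → j ≤ k →
        (if 1 ≤ l then ex x j (c + (l-1)) else 0)
          + (if 1 ≤ j ∧ l < sz b then ex x (j-1) (c + l) else 0) = 0 := by
      intro j l hlb hjk
      have := hE b l j hb (by simp [rho, hfl]; omega) hjk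
      rwa [if_neg (by simp [hfl])] at this
    have main : ∀ j i', i' < sz b → ex x j (c + i') = 0 := by
      intro j
      induction j with
      | zero =>
        intro i' hi'
        have := E2 0 (i'+1) (by omega) (by omega)
        rw [if_pos (show 1 ≤ i'+1 by omega),
          if_neg (show ¬(1 ≤ 0 ∧ i'+1 < sz b) by omega), add_zero] at this
        simpa using this
      | succ j ih =>
        intro i' hi'
        by_cases hjk : j + 1 ≤ k
        · have := E2 (j+1) (i'+1) (by omega) hjk
          rw [if_pos (by omega)] at this
          have h2 : (if 1 ≤ j+1 ∧ i'+1 < sz b then ex x (j+1-1) (c + (i'+1)) else 0) = 0 := by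
            by_cases hcond : 1 ≤ j+1 ∧ i'+1 < sz b
            · rw [if_pos hcond]
              simpa using ih (i'+1) (by omega)
            · rw [if_neg hcond]
          rw [h2, add_zero] at this
          simpa using this
        · exact ex_big x (by omega) _
    rw [show (y:ℕ) = c + ((y:ℕ) - c) by omega]
    exact main _ _ (by omega)
  · -- right-type block
    have hg : gam fl sz b = sz b + 1 := by simp [gam, hfl]
    have hszk : sz b ≤ k := hk b hb hfl
    have E1 : ∀ j l, l < sz b → j ≤ k →
        ex x j (c + l + 1) + (if 1 ≤ j then ex x (j-1) (c + l) else 0) = 0 := by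
      intro j l hlb hjk
      have := hE b l j hb (by simp [rho, hfl]; omega) hjk
      rwa [if_pos (by simp [hfl])] at this
    have down : ∀ t j l, j + 1 + t = k → k - sz b + l ≤ j → ex x j (c + l) = 0 := by
      intro t
      induction t with
      | zero =>
        intro j l h1 h2
        have hl : l < sz b := by omega
        have := E1 k l hl le_rfl
        rw [ex_big x (by omega), zero_add, if_pos (show 1 ≤ k by omega)] at this
        rw [show k - 1 = j by omega] at this
        exact this
      | succ t ih =>
        intro j l h1 h2
        have hl : l < sz b := by omega
        have := E1 (j+1) l hl (by omega)
        rw [show c + l + 1 = c + (l+1) by omega] at this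
        rw [ih (j+1) (l+1) (by omega) (by omega), zero_add,
          if_pos (show 1 ≤ j+1 by omega)] at this
        simpa using this
    have base : ∀ j, ex x j c = 0 := by
      intro j
      by_cases hjk : j < k
      · by_cases hjf : j < k - sz b
        · exact hpsi b hb hfl j hjf
        · have := down (k - 1 - j) j 0 (by omega) (by omega)
          simpa using this
      · exact ex_big x (by omega) _
    have cols : ∀ l, l ≤ sz b → ∀ j, ex x j (c + l) = 0 := by
      intro l
      induction l with
      | zero => intro _ j; simpa using base j
      | succ l ih =>
        intro hlb j
        by_cases hjk : j ≤ k
        · have := E1 j l (by omega) hjk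
          have h2 : (if 1 ≤ j then ex x (j-1) (c + l) else 0) = 0 := by
            by_cases hcond : 1 ≤ j
            · rw [if_pos hcond]; exact ih (by omega) (j-1)
            · rw [if_neg hcond]
          rw [h2, add_zero] at this
          rw [show c + (l+1) = c + l + 1 by omega]
          exact this
        · exact ex_big x (by omega) _
    rw [show (y:ℕ) = c + ((y:ℕ) - c) by omega]
    exact cols _ (by omega) _

end KerUpper

abbrev Efree (k N : ℕ) (fl : ℕ → Bool) (sz : ℕ → ℕ) :=
  (b : Fin N) → Fin (if fl (b:ℕ) then k - sz (b:ℕ) else 0) → ℂ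

lemma finrank_Efree (k N : ℕ) (fl : ℕ → Bool) (sz : ℕ → ℕ) :
    finrank ℂ (Efree k N fl sz) = ∑ b ∈ Finset.range N, (if fl b then k - sz b else 0) := by
  rw [Module.finrank_pi_fintype ℂ]
  rw [← Fin.sum_univ_eq_sum_range (fun b => if fl b then k - sz b else 0) N]
  refine Finset.sum_congr rfl fun b _ => ?_
  exact Module.finrank_fin_fun ℂ

lemma ex_add {k q : ℕ} (x y : Fin k → Fin q → ℂ) (j c : ℕ) :
    ex (x + y) j c = ex x j c + ex y j c := by
  by_cases h1 : j < k
  · by_cases h2 : c < q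
    · rw [ex_lt _ h1 h2, ex_lt _ h1 h2, ex_lt _ h1 h2]
      simp
    · simp only [ex, exv]
      rw [dif_pos h1, dif_pos h1, dif_pos h1, dif_neg h2, dif_neg h2, dif_neg h2]
      simp
  · rw [ex_big _ (by omega), ex_big _ (by omega), ex_big _ (by omega)]
    simp

lemma ex_smul {k q : ℕ} (a : ℂ) (x : Fin k → Fin q → ℂ) (j c : ℕ) :
    ex (a • x) j c = a * ex x j c := by
  by_cases h1 : j < k
  · by_cases h2 : c < q
    · rw [ex_lt _ h1 h2, ex_lt _ h1 h2]
      simp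
    · simp only [ex, exv]
      rw [dif_pos h1, dif_pos h1, dif_neg h2, dif_neg h2]
      simp
  · rw [ex_big _ (by omega), ex_big _ (by omega)]
    simp

noncomputable def psi (k N : ℕ) (fl : ℕ → Bool) (sz : ℕ → ℕ) (q : ℕ) :
    (Fin k → Fin q → ℂ) →ₗ[ℂ] Efree k N fl sz where
  toFun x := fun b jj => ex x (jj:ℕ) (off (gam fl sz) (b:ℕ))
  map_add' x y := by
    funext b jj
    simp only [Pi.add_apply, ex_add]
  map_smul' c x := by
    funext b jj
    simp only [Pi.smul_apply, RingHom.id_apply, smul_eq_mul, ex_smul]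

section KerUpper2

variable {k N p q : ℕ} {fl : ℕ → Bool} {sz : ℕ → ℕ}
variable (hp : off (rho fl sz) N = p) (hq : off (gam fl sz) N = q)

include hp hq in
lemma finrank_ker_BP_le (hk : ∀ b, b < N → fl b = true → sz b ≤ k) :
    finrank ℂ (LinearMap.ker (Sk k (BP N fl sz p q))) ≤
      ∑ b ∈ Finset.range N, (if fl b then k - sz b else 0) := by
  rw [← finrank_Efree k N fl sz]
  have hinj : Function.Injective
      ((psi k N fl sz q).comp (LinearMap.ker (Sk k (BP N fl sz p q))).subtype) := by
    rw [← LinearMap.ker_eq_bot, Submodule.eq_bot_iff]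
    intro z hz
    rw [LinearMap.mem_ker, LinearMap.comp_apply] at hz
    apply Subtype.ext
    apply ker_psi_zero hp hq hk z.1 z.2
    intro b hb hfl j hj
    have := congrFun (congrFun hz ⟨b, hb⟩) ⟨j, by simp only [hfl, if_true]; omega⟩
    simpa [psi] using this
  exact LinearMap.finrank_le_finrank_of_injective hinj

end KerUpper2
/-! ### Lower bound: explicit kernel elements -/

noncomputable def exu {k N : ℕ} {fl : ℕ → Bool} {sz : ℕ → ℕ} (u : Efree k N fl sz) :
    ℕ → ℕ → ℂ := fun b j =>
  if hb : b < N then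
    (if hj : j < (if fl b then k - sz b else 0) then u ⟨b, hb⟩ ⟨j, hj⟩ else 0)
  else 0

lemma exu_add {k N : ℕ} {fl : ℕ → Bool} {sz : ℕ → ℕ} (u v : Efree k N fl sz) (b j : ℕ) :
    exu (u + v) b j = exu u b j + exu v b j := by
  simp only [exu]
  by_cases hb : b < N
  · rw [dif_pos hb, dif_pos hb, dif_pos hb]
    by_cases hj : j < (if fl b then k - sz b else 0)
    · rw [dif_pos hj, dif_pos hj, dif_pos hj]; rfl
    · rw [dif_neg hj, dif_neg hj, dif_neg hj]; simp
  · rw [dif_neg hb, dif_neg hb, dif_neg hb]; simp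

lemma exu_smul {k N : ℕ} {fl : ℕ → Bool} {sz : ℕ → ℕ} (a : ℂ) (u : Efree k N fl sz) (b j : ℕ) :
    exu (a • u) b j = a * exu u b j := by
  simp only [exu]
  by_cases hb : b < N
  · rw [dif_pos hb, dif_pos hb]
    by_cases hj : j < (if fl b then k - sz b else 0)
    · rw [dif_pos hj, dif_pos hj]; rfl
    · rw [dif_neg hj, dif_neg hj]; simp
  · rw [dif_neg hb, dif_neg hb]; simp

noncomputable def Phi (k N : ℕ) (fl : ℕ → Bool) (sz : ℕ → ℕ) (q : ℕ) :
    Efree k N fl sz →ₗ[ℂ] (Fin k → Fin q → ℂ) where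
  toFun u := fun j y => ∑ b : Fin N,
    if fl (b:ℕ) = true ∧ off (gam fl sz) (b:ℕ) ≤ (y:ℕ)
        ∧ (y:ℕ) < off (gam fl sz) (b:ℕ) + gam fl sz (b:ℕ)
        ∧ (y:ℕ) - off (gam fl sz) (b:ℕ) ≤ (j:ℕ) then
      ((-1:ℂ))^((y:ℕ) - off (gam fl sz) (b:ℕ))
        * exu u (b:ℕ) ((j:ℕ) - ((y:ℕ) - off (gam fl sz) (b:ℕ)))
    else 0
  map_add' u v := by
    funext j y
    simp only [Pi.add_apply]
    rw [← Finset.sum_add_distrib]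
    refine Finset.sum_congr rfl fun b _ => ?_
    by_cases h : fl (b:ℕ) = true ∧ off (gam fl sz) (b:ℕ) ≤ (y:ℕ)
        ∧ (y:ℕ) < off (gam fl sz) (b:ℕ) + gam fl sz (b:ℕ)
        ∧ (y:ℕ) - off (gam fl sz) (b:ℕ) ≤ (j:ℕ)
    · rw [if_pos h, if_pos h, if_pos h, exu_add]
      ring
    · rw [if_neg h, if_neg h, if_neg h]
      simp
  map_smul' a u := by
    funext j y
    simp only [Pi.smul_apply, smul_eq_mul, RingHom.id_apply]
    rw [Finset.mul_sum]
    refine Finset.sum_congr rfl fun b _ => ?_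
    by_cases h : fl (b:ℕ) = true ∧ off (gam fl sz) (b:ℕ) ≤ (y:ℕ)
        ∧ (y:ℕ) < off (gam fl sz) (b:ℕ) + gam fl sz (b:ℕ)
        ∧ (y:ℕ) - off (gam fl sz) (b:ℕ) ≤ (j:ℕ)
    · rw [if_pos h, if_pos h, exu_smul]
      ring
    · rw [if_neg h, if_neg h]
      simp
section KerLower

variable {k N p q : ℕ} {fl : ℕ → Bool} {sz : ℕ → ℕ}
variable (hp : off (rho fl sz) N = p) (hq : off (gam fl sz) N = q)

include hq in
lemma ex_Phi {b i : ℕ} (hb : b < N) (hi : i < gam fl sz b)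
    (hkb : fl b = true → sz b ≤ k) (u : Efree k N fl sz) (j : ℕ) :
    ex (Phi k N fl sz q u) j (off (gam fl sz) b + i) =
      if fl b = true ∧ i ≤ j then ((-1:ℂ))^i * exu u b (j - i) else 0 := by
  have hcol : off (gam fl sz) b + i < q := by
    have := off_block_le (gam fl sz) hb; omega
  by_cases hjk : j < k
  · rw [ex_lt _ hjk hcol]
    show (∑ b' : Fin N,
      if fl ((b':Fin N):ℕ) = true ∧ off (gam fl sz) ((b':Fin N):ℕ) ≤ (off (gam fl sz) b + i)
          ∧ (off (gam fl sz) b + i) < off (gam fl sz) ((b':Fin N):ℕ) + gam fl sz ((b':Fin N):ℕ)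
          ∧ (off (gam fl sz) b + i) - off (gam fl sz) ((b':Fin N):ℕ) ≤ j then
        ((-1:ℂ))^((off (gam fl sz) b + i) - off (gam fl sz) ((b':Fin N):ℕ))
          * exu u ((b':Fin N):ℕ) (j - ((off (gam fl sz) b + i) - off (gam fl sz) ((b':Fin N):ℕ)))
      else 0) = _
    rw [Finset.sum_eq_single (⟨b, hb⟩ : Fin N)]
    · simp only [Nat.add_sub_cancel_left]
      by_cases hcnd : fl b = true ∧ i ≤ j
      · rw [if_pos ⟨hcnd.1, by omega, by omega, hcnd.2⟩, if_pos hcnd]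
      · rw [if_neg (show ¬(fl b = true ∧ off (gam fl sz) b ≤ off (gam fl sz) b + i
            ∧ off (gam fl sz) b + i < off (gam fl sz) b + gam fl sz b ∧ i ≤ j) by
            rintro ⟨h1, _, _, h4⟩; exact hcnd ⟨h1, h4⟩), if_neg hcnd]
    · intro b' _ hne
      rw [if_neg]
      rintro ⟨_, d1, d2, _⟩
      have hbe : ((b' : Fin N) : ℕ) = b := block_eq (gam fl sz) d1 d2 (by omega) (by omega)
      exact hne (Fin.ext hbe)
    · intro hmem
      exact absurd (Finset.mem_univ _) hmem
  · rw [ex_big _ (by omega)]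
    by_cases hcnd : fl b = true ∧ i ≤ j
    · rw [if_pos hcnd]
      have hsz := hkb hcnd.1
      have hgb : gam fl sz b = sz b + 1 := by simp [gam, hcnd.1]
      have h0 : exu u b (j - i) = 0 := by
        simp only [exu]
        rw [dif_pos hb, dif_neg (show ¬(j - i < if fl b then k - sz b else 0) by
          rw [if_pos hcnd.1]; omega)]
      rw [h0, mul_zero]
    · rw [if_neg hcnd]

include hp hq in
lemma Phi_mem_ker (hk : ∀ b, b < N → fl b = true → sz b ≤ k) (u : Efree k N fl sz) :
    Phi k N fl sz q u ∈ LinearMap.ker (Sk k (BP N fl sz p q)) := by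
  rw [mem_ker_BP hp hq]
  intro b l j hb hl hj
  cases hfl : fl b
  · rw [if_neg (by simp [hfl])]
    have hg : gam fl sz b = sz b := by simp [gam, hfl]
    have hlsz : l < sz b + 1 := by simpa [rho, hfl] using hl
    have hz : ∀ i j', i < gam fl sz b →
        ex (Phi k N fl sz q u) j' (off (gam fl sz) b + i) = 0 := by
      intro i j' hi
      rw [ex_Phi hq hb hi (fun hf => hk b hb hf) u j']
      rw [if_neg (show ¬(fl b = true ∧ i ≤ j') by rintro ⟨hf, _⟩; rw [hfl] at hf; simp at hf)]
    have t1 : (if 1 ≤ l then ex (Phi k N fl sz q u) j (off (gam fl sz) b + (l-1)) else 0) = 0 := by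
      by_cases h1 : 1 ≤ l
      · rw [if_pos h1, hz (l-1) j (by omega)]
      · rw [if_neg h1]
    have t2 : (if 1 ≤ j ∧ l < sz b then
        ex (Phi k N fl sz q u) (j-1) (off (gam fl sz) b + l) else 0) = 0 := by
      by_cases h2 : 1 ≤ j ∧ l < sz b
      · rw [if_pos h2, hz l (j-1) (by omega)]
      · rw [if_neg h2]
    rw [t1, t2, add_zero]
  · rw [if_pos (by simp [hfl])]
    have hlsz : l < sz b := by simpa [rho, hfl] using hl
    have hg : gam fl sz b = sz b + 1 := by simp [gam, hfl]
    have hkb : fl b = true → sz b ≤ k := fun _ => hk b hb hfl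
    rw [show off (gam fl sz) b + l + 1 = off (gam fl sz) b + (l+1) by omega]
    rw [ex_Phi hq hb (show l+1 < gam fl sz b by omega) hkb u j]
    by_cases hj1 : 1 ≤ j
    · rw [if_pos hj1, ex_Phi hq hb (show l < gam fl sz b by omega) hkb u (j-1)]
      by_cases hcnd : l + 1 ≤ j
      · rw [if_pos ⟨hfl, hcnd⟩, if_pos ⟨hfl, by omega⟩]
        rw [show j - 1 - l = j - (l+1) by omega]
        rw [pow_succ]
        ring
      · rw [if_neg (show ¬(fl b = true ∧ l + 1 ≤ j) by rintro ⟨_, hc⟩; omega),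
          if_neg (show ¬(fl b = true ∧ l ≤ j - 1) by rintro ⟨_, hc⟩; omega)]
        simp
    · rw [if_neg hj1, if_neg (show ¬(fl b = true ∧ l + 1 ≤ j) by rintro ⟨_, hc⟩; omega),
        add_zero]

include hp hq in
lemma nu_BP (hk : ∀ b, b < N → fl b = true → sz b ≤ k) :
    nu k (BP N fl sz p q) = ∑ b ∈ Finset.range N, (if fl b then k - sz b else 0) := by
  refine le_antisymm (finrank_ker_BP_le hp hq hk) ?_
  rw [← finrank_Efree k N fl sz]
  have hPhi : ∀ u : Efree k N fl sz,
      Phi k N fl sz q u ∈ LinearMap.ker (Sk k (BP N fl sz p q)) := Phi_mem_ker hp hq hk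
  have hinj : Function.Injective
      ((Phi k N fl sz q).codRestrict (LinearMap.ker (Sk k (BP N fl sz p q))) hPhi) := by
    intro u v huv
    have hval : Phi k N fl sz q u = Phi k N fl sz q v := congrArg Subtype.val huv
    have h0 : Phi k N fl sz q (u - v) = 0 := by
      rw [map_sub, hval, sub_self]
    have hsub : u - v = 0 := by
      funext b z
      cases hfl : fl (b:ℕ)
      · exact absurd z.isLt (by simp [hfl])
      · have hg0 : 0 < gam fl sz (b:ℕ) := by simp [gam, hfl]
        have hthis := ex_Phi hq b.isLt hg0 (fun _ => hk _ b.isLt hfl) (u - v) (z:ℕ)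
        rw [h0, ex_zero, if_pos ⟨hfl, Nat.zero_le _⟩] at hthis
        simp only [pow_zero, one_mul, Nat.sub_zero] at hthis
        have h2 := hthis.symm
        simp only [exu] at h2
        rw [dif_pos b.isLt, dif_pos z.isLt] at h2
        simpa using h2
    have := sub_eq_zero.mp hsub
    exact this
  exact LinearMap.finrank_le_finrank_of_injective hinj

end KerLower
/-! ### Identification of `genPencil` with `BP`, and transposes -/

lemma rho_secSize (c₁ c₂ c₃ e₁ e₂ f₁ f₂ : ℕ) :
    rho (fun b => decide (b < c₁+c₂)) (secSize c₁ c₂ c₃ e₁ e₂ f₁ f₂)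
      = secSize c₁ c₂ c₃ e₁ e₂ (f₁+1) (f₂+1) := by
  funext b
  simp only [rho, secSize, decide_eq_true_eq]
  split_ifs <;> first | rfl | omega

lemma gam_secSize (c₁ c₂ c₃ e₁ e₂ f₁ f₂ : ℕ) :
    gam (fun b => decide (b < c₁+c₂)) (secSize c₁ c₂ c₃ e₁ e₂ f₁ f₂)
      = secSize c₁ c₂ c₃ (e₁+1) (e₂+1) f₁ f₂ := by
  funext b
  simp only [gam, secSize, decide_eq_true_eq]
  split_ifs <;> first | rfl | omega

lemma rho_neg_secSize (c₁ c₂ c₃ e₁ e₂ f₁ f₂ : ℕ) :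
    rho (fun b => !decide (b < c₁+c₂)) (secSize c₁ c₂ c₃ e₁ e₂ f₁ f₂)
      = secSize c₁ c₂ c₃ (e₁+1) (e₂+1) f₁ f₂ := by
  funext b
  simp only [rho, secSize, Bool.not_eq_true', decide_eq_false_iff_not]
  split_ifs <;> first | rfl | omega

lemma gam_neg_secSize (c₁ c₂ c₃ e₁ e₂ f₁ f₂ : ℕ) :
    gam (fun b => !decide (b < c₁+c₂)) (secSize c₁ c₂ c₃ e₁ e₂ f₁ f₂)
      = secSize c₁ c₂ c₃ e₁ e₂ (f₁+1) (f₂+1) := by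
  funext b
  simp only [gam, secSize, Bool.not_eq_true', decide_eq_false_iff_not]
  split_ifs <;> first | rfl | omega

lemma genPencil_eq_BP (c₁ c₂ c₃ c₄ e₁ e₂ f₁ f₂ p q : ℕ) :
    genPencil c₁ c₂ c₃ c₄ e₁ e₂ f₁ f₂ p q =
      BP (c₁+c₂+c₃+c₄) (fun b => decide (b < c₁+c₂)) (secSize c₁ c₂ c₃ e₁ e₂ f₁ f₂) p q := by
  unfold genPencil BP
  rw [rho_secSize, gam_secSize]
  have hent : (fun b i j => if (fun b => decide (b < c₁+c₂)) b then (if j = i+1 then (1:ℂ) else 0)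
      else (if i = j+1 then (1:ℂ) else 0))
      = (fun b i j => if b < c₁ + c₂ then (if j = i+1 then (1:ℂ) else 0)
        else (if i = j+1 then (1:ℂ) else 0)) := by
    funext b i j
    simp only [decide_eq_true_eq]
  rw [hent]

lemma dsum_transpose (N : ℕ) (ρ γ : ℕ → ℕ) (ent : ℕ → ℕ → ℕ → ℂ) (p q : ℕ) :
    (dsum N ρ γ ent p q)ᵀ = dsum N γ ρ (fun b i j => ent b j i) q p := by
  funext x y
  simp only [Matrix.transpose_apply, dsum]
  refine Finset.sum_congr rfl fun b _ => ?_
  by_cases h : off ρ b ≤ (y:ℕ) ∧ (y:ℕ) < off ρ b + ρ b ∧ off γ b ≤ (x:ℕ) ∧ (x:ℕ) < off γ b + γ b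
  · rw [if_pos ⟨h.1, h.2.1, h.2.2.1, h.2.2.2⟩, if_pos ⟨h.2.2.1, h.2.2.2, h.1, h.2.1⟩]
  · rw [if_neg h, if_neg (by tauto)]

lemma tp_genPencil (c₁ c₂ c₃ c₄ e₁ e₂ f₁ f₂ p q : ℕ) :
    tp (genPencil c₁ c₂ c₃ c₄ e₁ e₂ f₁ f₂ p q) =
      BP (c₁+c₂+c₃+c₄) (fun b => !decide (b < c₁+c₂)) (secSize c₁ c₂ c₃ e₁ e₂ f₁ f₂) q p := by
  unfold tp genPencil BP
  rw [rho_neg_secSize, gam_neg_secSize]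
  rw [dsum_transpose, dsum_transpose]
  have hA : (fun (b i j : ℕ) => if j = i then (1:ℂ) else 0)
      = (fun (_ i j : ℕ) => if i = j then (1:ℂ) else 0) := by
    funext b i j
    by_cases h : i = j <;> simp [h, eq_comm]
  have hB : (fun (b i j : ℕ) => if b < c₁+c₂ then (if i = j+1 then (1:ℂ) else 0)
        else (if j = i+1 then (1:ℂ) else 0))
      = (fun (b i j : ℕ) => if (!decide (b < c₁+c₂)) = true then (if j = i+1 then (1:ℂ) else 0)
        else (if i = j+1 then (1:ℂ) else 0)) := by
    funext b i j
    by_cases h : b < c₁+c₂ <;> simp [h]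
  rw [hA, hB]
/-! ### Evaluating the block sums -/

lemma off_const_on (g : ℕ → ℕ) (x c v : ℕ) (h : ∀ i, x ≤ i → i < x + c → g i = v) :
    off g (x + c) = off g x + c * v := by
  induction c with
  | zero => simp
  | succ c ih =>
    rw [show x + (c+1) = (x+c)+1 from rfl, off_succ,
      ih (fun i h1 h2 => h i h1 (by omega)), h (x+c) (by omega) (by omega)]
    ring

lemma sum_four_chunks (c₁ c₂ c₃ c₄ : ℕ) (g : ℕ → ℕ) (v₁ v₂ v₃ v₄ : ℕ)
    (h1 : ∀ i, i < c₁ → g i = v₁)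
    (h2 : ∀ i, c₁ ≤ i → i < c₁+c₂ → g i = v₂)
    (h3 : ∀ i, c₁+c₂ ≤ i → i < c₁+c₂+c₃ → g i = v₃)
    (h4 : ∀ i, c₁+c₂+c₃ ≤ i → i < c₁+c₂+c₃+c₄ → g i = v₄) :
    ∑ b ∈ Finset.range (c₁+c₂+c₃+c₄), g b = c₁*v₁ + c₂*v₂ + c₃*v₃ + c₄*v₄ := by
  have e0 : ∑ b ∈ Finset.range (c₁+c₂+c₃+c₄), g b = off g (c₁+c₂+c₃+c₄) := rfl
  have o1 : off g c₁ = c₁ * v₁ := by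
    have := off_const_on g 0 c₁ v₁ (fun i _ h2' => h1 i (by omega))
    simpa [off] using this
  have o2 := off_const_on g c₁ c₂ v₂ (fun i h1' h2' => h2 i h1' h2')
  have o3 := off_const_on g (c₁+c₂) c₃ v₃ (fun i h1' h2' => h3 i h1' h2')
  have o4 := off_const_on g (c₁+c₂+c₃) c₄ v₄ (fun i h1' h2' => h4 i h1' h2')
  rw [e0, o4, o3, o2, o1]

lemma off_secSize (c₁ c₂ c₃ c₄ v₁ v₂ v₃ v₄ : ℕ) :
    off (secSize c₁ c₂ c₃ v₁ v₂ v₃ v₄) (c₁+c₂+c₃+c₄) = c₁*v₁ + c₂*v₂ + c₃*v₃ + c₄*v₄ := by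
  refine sum_four_chunks c₁ c₂ c₃ c₄ _ v₁ v₂ v₃ v₄
    (by intro i hi; simp only [secSize]; split_ifs <;> omega)
    (by intro i hi1 hi2; simp only [secSize]; split_ifs <;> omega)
    (by intro i hi1 hi2; simp only [secSize]; split_ifs <;> omega)
    (by intro i hi1 hi2; simp only [secSize]; split_ifs <;> omega)

lemma nu_genPencil (k c₁ c₂ c₃ c₄ e₁ e₂ f₁ f₂ p q : ℕ)
    (hp : c₁*e₁ + c₂*e₂ + c₃*(f₁+1) + c₄*(f₂+1) = p)
    (hq : c₁*(e₁+1) + c₂*(e₂+1) + c₃*f₁ + c₄*f₂ = q)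
    (he1 : e₁ ≤ k) (he2 : e₂ ≤ k) :
    nu k (genPencil c₁ c₂ c₃ c₄ e₁ e₂ f₁ f₂ p q) = c₁*(k-e₁) + c₂*(k-e₂) := by
  rw [genPencil_eq_BP]
  rw [nu_BP (by rw [rho_secSize, off_secSize]; exact hp)
    (by rw [gam_secSize, off_secSize]; exact hq)
    (by
      intro b hb hfl
      simp only [decide_eq_true_eq] at hfl
      simp only [secSize]
      split_ifs <;> omega)]
  have := sum_four_chunks c₁ c₂ c₃ c₄
    (fun b => if (fun b => decide (b < c₁+c₂)) b = true
      then k - secSize c₁ c₂ c₃ e₁ e₂ f₁ f₂ b else 0) (k-e₁) (k-e₂) 0 0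
    (by intro i hi; simp only [secSize, decide_eq_true_eq]; split_ifs <;> omega)
    (by intro i hi1 hi2; simp only [secSize, decide_eq_true_eq]; split_ifs <;> omega)
    (by intro i hi1 hi2; simp only [secSize, decide_eq_true_eq]; split_ifs <;> omega)
    (by intro i hi1 hi2; simp only [secSize, decide_eq_true_eq]; split_ifs <;> omega)
  rw [this]
  ring

lemma nu_tp_genPencil (k c₁ c₂ c₃ c₄ e₁ e₂ f₁ f₂ p q : ℕ)
    (hp : c₁*e₁ + c₂*e₂ + c₃*(f₁+1) + c₄*(f₂+1) = p)
    (hq : c₁*(e₁+1) + c₂*(e₂+1) + c₃*f₁ + c₄*f₂ = q)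
    (hf1 : f₁ ≤ k) (hf2 : f₂ ≤ k) :
    nu k (tp (genPencil c₁ c₂ c₃ c₄ e₁ e₂ f₁ f₂ p q)) = c₃*(k-f₁) + c₄*(k-f₂) := by
  rw [tp_genPencil]
  rw [nu_BP (by rw [rho_neg_secSize, off_secSize]; exact hq)
    (by rw [gam_neg_secSize, off_secSize]; exact hp)
    (by
      intro b hb hfl
      simp only [Bool.not_eq_true', decide_eq_false_iff_not] at hfl
      simp only [secSize]
      split_ifs <;> omega)]
  have := sum_four_chunks c₁ c₂ c₃ c₄
    (fun b => if (fun b => !decide (b < c₁+c₂)) b = true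
      then k - secSize c₁ c₂ c₃ e₁ e₂ f₁ f₂ b else 0) 0 0 (k-f₁) (k-f₂)
    (by intro i hi; simp only [secSize, Bool.not_eq_true', decide_eq_false_iff_not]
        split_ifs <;> omega)
    (by intro i hi1 hi2; simp only [secSize, Bool.not_eq_true', decide_eq_false_iff_not]
        split_ifs <;> omega)
    (by intro i hi1 hi2; simp only [secSize, Bool.not_eq_true', decide_eq_false_iff_not]
        split_ifs <;> omega)
    (by intro i hi1 hi2; simp only [secSize, Bool.not_eq_true', decide_eq_false_iff_not]
        split_ifs <;> omega)
  rw [this]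
  ring
/-! ### Arithmetic identities -/

lemma arith_row (a0 r d w v α β s t m n d2 S' T' : ℕ)
    (h1 : w*α + s = a0) (h2 : a0 + (v*β + t) = r*d)
    (h3 : w = s + S') (h4 : v = t + T') (h5 : d = d2 + 1) (h6 : m = r + v) (h7 : n = r + w) :
    s*(α+d) + S'*(α+d2) + t*(β+2) + T'*(β+1) = m + n*d2 := by
  subst h3 h4 h5 h6 h7
  subst h1
  zify at h2 ⊢
  linear_combination h2

lemma arith_col (a0 r d w v α β s t n d2 S' T' : ℕ)
    (h1 : w*α + s = a0) (h2 : a0 + (v*β + t) = r*d)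
    (h3 : w = s + S') (h4 : v = t + T') (h5 : d = d2 + 1) (h7 : n = r + w) :
    s*((α+d)+1) + S'*((α+d2)+1) + t*(β+1) + T'*β = n*d := by
  subst h3 h4 h5 h7
  subst h1
  zify at h2 ⊢
  linear_combination h2

lemma arith_nu1 (k a0 w d α s S' d2 K1 : ℕ) (h1 : w*α + s = a0) (h3 : w = s + S')
    (h5 : d = d2+1) (hK : k = (α+d)+K1) :
    s*(k - (α+d)) + S'*(k - (α+d-1)) + (a0 + w*(d-1)) = w*k := by
  subst h5 h3 hK
  subst h1
  rw [show α + (d2+1) + K1 - (α + (d2+1)) = K1 by omega,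
    show α + (d2+1) + K1 - (α + (d2+1) - 1) = K1 + 1 by omega,
    show d2 + 1 - 1 = d2 by omega]
  ring

lemma arith_nu2 (k a0 r v d β t T' K2 : ℕ) (h2 : v*β + t = r*d - a0) (h4 : v = t + T')
    (hK : k = (β+1)+K2) :
    t*(k - (β+1)) + T'*(k - β) + (r*d - a0) = v*k := by
  rw [← h2]
  subst h4 hK
  rw [show β + 1 + K2 - (β+1) = K2 by omega, show β + 1 + K2 - β = K2 + 1 by omega]
  ring
end Sep
/-- For `a ≠ a'`, the closure of the strict equivalence orbit of `G_a`
does not meet the strict equivalence orbit of `G_{a'}`. -/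
theorem closure_orbE_Ga_disjoint (m n d r a a' : ℕ) (hm : 2 ≤ m) (hn : 2 ≤ n)
    (hd : 1 ≤ d) (hr1 : 1 ≤ r) (hr2 : r ≤ min m n - 1)
    (ha : a ≤ r * d) (ha' : a' ≤ r * d) (hne : a ≠ a') :
    closure (orbE (Ga m n d r a)) ∩ orbE (Ga m n d r a') = ∅ := by
  have hminm : min m n ≤ m := Nat.min_le_left m n
  have hminn : min m n ≤ n := Nat.min_le_right m n
  have hminge : 2 ≤ min m n := le_min hm hn
  have hrm : r + 1 ≤ m := by omega
  have hrn : r + 1 ≤ n := by omega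
  apply Set.eq_empty_iff_forall_notMem.mpr
  rintro F ⟨hcl, horb⟩
  set k := r*d + d with hkdef
  have key : ∀ a0, a0 ≤ r*d →
      Sep.nu k (Ga m n d r a0) + (a0 + (n-r)*(d-1)) = (n-r)*k ∧
      Sep.nu k (Sep.tp (Ga m n d r a0)) + (r*d - a0) = (m-r)*k := by
    intro a0 ha0
    set w := n - r with hwdef
    set v := m - r with hvdef
    have hw : 1 ≤ w := by omega
    have hv : 1 ≤ v := by omega
    set α := a0 / w with hα
    set s := a0 % w with hs
    set β := (r*d - a0) / v with hβ
    set t := (r*d - a0) % v with ht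
    have hds : w * α + s = a0 := Nat.div_add_mod a0 w
    have hdt : v * β + t = r*d - a0 := Nat.div_add_mod (r*d - a0) v
    have hslt : s < w := Nat.mod_lt _ (by omega)
    have htlt : t < v := Nat.mod_lt _ (by omega)
    have hα_le : α ≤ a0 := Nat.div_le_self _ _
    have hβ_le : β ≤ r*d - a0 := Nat.div_le_self _ _
    have hra : a0 + (v*β + t) = r*d := by rw [hdt]; omega
    have hGa : Ga m n d r a0 =
        genPencil s (w - s) t (v - t) (α+d) (α+d-1) (β+1) β (m + n*(d-1)) (n*d) := rfl
    clear_value k w v α s β t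
    obtain ⟨S', hS'⟩ : ∃ S', w = s + S' := ⟨w - s, by omega⟩
    obtain ⟨T', hT'⟩ : ∃ T', v = t + T' := ⟨v - t, by omega⟩
    obtain ⟨d2, hd2⟩ : ∃ d2, d = d2 + 1 := ⟨d - 1, by omega⟩
    obtain ⟨K1, hK1⟩ : ∃ K1, k = (α+d)+K1 := ⟨k - (α+d), by omega⟩
    obtain ⟨K2, hK2⟩ : ∃ K2, k = (β+1)+K2 := ⟨k - (β+1), by omega⟩
    have hrow : s*(α+d) + (w-s)*(α+d-1) + t*((β+1)+1) + (v-t)*(β+1) = m + n*(d-1) := by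
      rw [show w - s = S' by omega, show v - t = T' by omega,
        show α + d - 1 = α + d2 by omega, show d - 1 = d2 by omega,
        show (β+1)+1 = β+2 by omega]
      exact Sep.arith_row a0 r d w v α β s t m n d2 S' T' hds hra hS' hT' hd2
        (by omega) (by omega)
    have hcol : s*((α+d)+1) + (w-s)*((α+d-1)+1) + t*(β+1) + (v-t)*β = n*d := by
      rw [show w - s = S' by omega, show v - t = T' by omega,
        show α + d - 1 = α + d2 by omega]
      exact Sep.arith_col a0 r d w v α β s t n d2 S' T' hds hra hS' hT' hd2 (by omega)
    constructor
    · rw [hGa, Sep.nu_genPencil k s (w-s) t (v-t) (α+d) (α+d-1) (β+1) β _ _ hrow hcol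
        (by omega) (by omega)]
      rw [show w - s = S' by omega]
      exact Sep.arith_nu1 k a0 w d α s S' d2 K1 hds hS' hd2 hK1
    · rw [hGa, Sep.nu_tp_genPencil k s (w-s) t (v-t) (α+d) (α+d-1) (β+1) β _ _ hrow hcol
        (by omega) (by omega)]
      rw [show v - t = T' by omega]
      exact Sep.arith_nu2 k a0 r v d β t T' K2 hdt hT' hK2
  obtain ⟨n1, n2⟩ := key a ha
  obtain ⟨n1', n2'⟩ := key a' ha'
  have c1 : Sep.nu k (Ga m n d r a) ≤ Sep.nu k F := Sep.nu_le_of_mem_closure k hcl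
  have c2 : Sep.nu k F = Sep.nu k (Ga m n d r a') := (Sep.nu_strictEquiv k horb).symm
  have c3 : Sep.nu k (Sep.tp (Ga m n d r a)) ≤ Sep.nu k (Sep.tp F) :=
    Sep.nu_le_of_mem_closure k (Sep.mem_closure_tp hcl)
  have c4 : Sep.nu k (Sep.tp F) = Sep.nu k (Sep.tp (Ga m n d r a')) :=
    (Sep.nu_strictEquiv k (Sep.strictEquiv_tp horb)).symm
  omega

end MPoly
end

section
/- Let m, n ≥ 2, d ≥ 1, and 1 ≤ r ≤ min{m,n}−1 be integers, and let a₁ be an integer with 0 ≤ a₁ < (n−r)(d−1). Set m₁ = m+n(d−1), n₁ = nd, r₁ = r+n(d−1), α₁ = ⌊a₁/(n₁−r₁)⌋, s₁ = a₁ mod (n₁−r₁), β₁ = ⌊(r₁−a₁)/(m₁−r₁)⌋, t₁ = (r₁−a₁) mod (m₁−r₁), and let K_{a₁} be the block-diagonal pencil (direct sum) consisting of s₁ copies of L_{α₁+1}, n₁−r₁−s₁ copies of L_{α₁}, t₁ copies of L_{β₁+1}ᵀ, and m₁−r₁−t₁ copies of L_{β₁}ᵀ. Then there exists no M ∈ POL_{d,m×n}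 whose first companion form C¹_M is strictly equivalent to K_{a₁}. -/
open Matrix Finset

namespace MPoly

/-! ### Auxiliary machinery: polynomial null vectors of pencils -/

/-- A pencil `λA+B` viewed as a matrix over `ℂ[λ]`. -/
noncomputable def penPoly {p q : ℕ} (L : Pencil p q) :
    Matrix (Fin p) (Fin q) (Polynomial ℂ) :=
  fun i j => Polynomial.C (L.1 i j) * Polynomial.X + Polynomial.C (L.2 i j)

lemma off_mono (sz : ℕ → ℕ) {a b : ℕ} (h : a ≤ b) : off sz a ≤ off sz b :=
  Finset.sum_le_sum_of_subset (Finset.range_subset_range.mpr h)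

lemma off_succ (sz : ℕ → ℕ) (b : ℕ) : off sz (b+1) = off sz b + sz b :=
  Finset.sum_range_succ _ _

lemma block_disjoint (sz : ℕ → ℕ) {b b' y : ℕ} (hbb : b ≠ b')
    (h1 : off sz b' ≤ y) (h2 : y < off sz b' + sz b') :
    ¬ (off sz b ≤ y ∧ y < off sz b + sz b) := by
  rintro ⟨g1, g2⟩
  rcases Nat.lt_or_ge b b' with h | h
  · have h3 := off_mono sz (Nat.succ_le_of_lt h)
    rw [off_succ] at h3
    omega
  · have hb : b' < b := Nat.lt_of_le_of_ne h (Ne.symm hbb)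
    have h3 := off_mono sz (Nat.succ_le_of_lt hb)
    rw [off_succ] at h3
    omega

lemma dsum_apply_block {N : ℕ} (ρf γf : ℕ → ℕ) (ent : ℕ → ℕ → ℕ → ℂ) {p q : ℕ}
    {B : ℕ} (hB : B < N) (x : Fin p) (y : Fin q)
    (hy1 : off γf B ≤ (y:ℕ)) (hy2 : (y:ℕ) < off γf B + γf B) :
    dsum N ρf γf ent p q x y =
      if off ρf B ≤ (x:ℕ) ∧ (x:ℕ) < off ρf B + ρf B
      then ent B ((x:ℕ) - off ρf B) ((y:ℕ) - off γf B) else 0 := by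
  unfold dsum
  rw [Finset.sum_eq_single B]
  · by_cases hx : off ρf B ≤ (x:ℕ) ∧ (x:ℕ) < off ρf B + ρf B
    · rw [if_pos ⟨hx.1, hx.2, hy1, hy2⟩, if_pos hx]
    · rw [if_neg (by tauto), if_neg hx]
  · intro b _ hb
    rw [if_neg]
    rintro ⟨_, _, hc1, hc2⟩
    exact block_disjoint γf hb hy1 hy2 ⟨hc1, hc2⟩
  · intro hB'
    exact absurd (Finset.mem_range.mpr hB) hB'

lemma genPencil_null (c₁ c₂ c₃ c₄ e₁ e₂ f₁ f₂ p q : ℕ) (hc₂ : 1 ≤ c₂)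
    (hfit : c₁*(e₁+1) + (e₂+1) ≤ q) :
    ∃ v : Fin q → Polynomial ℂ, v ≠ 0 ∧ (∀ y, (v y).degree ≤ (e₂ : WithBot ℕ)) ∧
      penPoly (genPencil c₁ c₂ c₃ c₄ e₁ e₂ f₁ f₂ p q) *ᵥ v = 0 := by
  classical
  set ρf : ℕ → ℕ := secSize c₁ c₂ c₃ e₁ e₂ (f₁+1) (f₂+1) with hρf
  set γf : ℕ → ℕ := secSize c₁ c₂ c₃ (e₁+1) (e₂+1) f₁ f₂ with hγf
  have hγc₁ : γf c₁ = e₂ + 1 := by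
    rw [hγf]; unfold secSize
    rw [if_neg (lt_irrefl c₁), if_pos (by omega)]
  have hρc₁ : ρf c₁ = e₂ := by
    rw [hρf]; unfold secSize
    rw [if_neg (lt_irrefl c₁), if_pos (by omega)]
  have hoffγ : off γf c₁ = c₁ * (e₁+1) := by
    unfold off
    have : ∀ j ∈ Finset.range c₁, γf j = e₁ + 1 := by
      intro j hj
      rw [hγf]; unfold secSize; rw [if_pos (Finset.mem_range.mp hj)]
    rw [Finset.sum_congr rfl this, Finset.sum_const, Finset.card_range, smul_eq_mul]
  have hoffρ : off ρf c₁ = c₁ * e₁ := by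
    unfold off
    have : ∀ j ∈ Finset.range c₁, ρf j = e₁ := by
      intro j hj
      rw [hρf]; unfold secSize; rw [if_pos (Finset.mem_range.mp hj)]
    rw [Finset.sum_congr rfl this, Finset.sum_const, Finset.card_range, smul_eq_mul]
  have hBN : c₁ < c₁ + c₂ + c₃ + c₄ := by omega
  set W : ℕ := c₁ * (e₁ + 1) with hW
  refine ⟨fun y => if W ≤ (y:ℕ) ∧ (y:ℕ) < W + (e₂+1)
      then (-Polynomial.X)^((y:ℕ) - W) else 0, ?_, ?_, ?_⟩
  · -- nonzero
    intro hv0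
    have h0 : W < q := by omega
    have h1 := congrFun hv0 ⟨W, h0⟩
    simp only [Fin.val_mk] at h1
    rw [if_pos ⟨le_refl W, by omega⟩] at h1
    simp at h1
  · -- degree bound
    intro y
    dsimp only
    by_cases hy : W ≤ (y:ℕ) ∧ (y:ℕ) < W + (e₂+1)
    · rw [if_pos hy, Polynomial.degree_pow, Polynomial.degree_neg, Polynomial.degree_X,
        nsmul_eq_mul, mul_one]
      exact_mod_cast (by omega : (y:ℕ) - W ≤ e₂)
    · rw [if_neg hy]; simp
  · -- null vector
    funext x
    simp only [Matrix.mulVec, dotProduct, Pi.zero_apply]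
    have hGA : ∀ y : Fin q, (genPencil c₁ c₂ c₃ c₄ e₁ e₂ f₁ f₂ p q).1 x y
        = dsum (c₁+c₂+c₃+c₄) ρf γf (fun _ i j => if i = j then (1:ℂ) else 0) p q x y :=
      fun _ => rfl
    have hGB : ∀ y : Fin q, (genPencil c₁ c₂ c₃ c₄ e₁ e₂ f₁ f₂ p q).2 x y
        = dsum (c₁+c₂+c₃+c₄) ρf γf
            (fun b i j => if b < c₁ + c₂ then (if j = i+1 then (1:ℂ) else 0)
              else (if i = j+1 then 1 else 0)) p q x y :=
      fun _ => rfl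
    by_cases hx : c₁ * e₁ ≤ (x:ℕ) ∧ (x:ℕ) < c₁ * e₁ + e₂
    · -- row inside the chosen block
      set i : ℕ := (x:ℕ) - c₁*e₁ with hi
      have hiE : i < e₂ := by omega
      have hy₁q : W + i < q := by omega
      have hy₂q : W + i + 1 < q := by omega
      have hterm : ∀ y : Fin q,
          penPoly (genPencil c₁ c₂ c₃ c₄ e₁ e₂ f₁ f₂ p q) x y *
            (if W ≤ (y:ℕ) ∧ (y:ℕ) < W + (e₂+1) then (-Polynomial.X)^((y:ℕ) - W) else 0)
          = (if y = (⟨W + i, hy₁q⟩ : Fin q) then Polynomial.X * (-Polynomial.X)^i else 0)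
            + (if y = (⟨W + i + 1, hy₂q⟩ : Fin q) then (-Polynomial.X)^(i+1) else 0) := by
        intro y
        by_cases hy : W ≤ (y:ℕ) ∧ (y:ℕ) < W + (e₂+1)
        · rw [if_pos hy]
          have hy1 : off γf c₁ ≤ (y:ℕ) := by rw [hoffγ]; exact hy.1
          have hy2 : (y:ℕ) < off γf c₁ + γf c₁ := by rw [hoffγ, hγc₁]; exact hy.2
          have hxc : off ρf c₁ ≤ (x:ℕ) ∧ (x:ℕ) < off ρf c₁ + ρf c₁ := by
            rw [hoffρ, hρc₁]; exact hx
          have hA := dsum_apply_block ρf γf (fun _ i j => if i = j then (1:ℂ) else 0)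
            hBN x y hy1 hy2
          have hB := dsum_apply_block ρf γf
            (fun b i j => if b < c₁ + c₂ then (if j = i+1 then (1:ℂ) else 0)
              else (if i = j+1 then 1 else 0)) hBN x y hy1 hy2
          rw [if_pos hxc] at hA hB
          simp only [if_pos (show c₁ < c₁ + c₂ by omega)] at hB
          rw [hoffρ, hoffγ] at hA hB
          show (Polynomial.C ((genPencil c₁ c₂ c₃ c₄ e₁ e₂ f₁ f₂ p q).1 x y) * Polynomial.X
              + Polynomial.C ((genPencil c₁ c₂ c₃ c₄ e₁ e₂ f₁ f₂ p q).2 x y))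
              * (-Polynomial.X)^((y:ℕ) - W) = _
          rw [hGA y, hGB y, hA, hB]
          have hcy₁ : (y = (⟨W + i, hy₁q⟩ : Fin q)) ↔ ((y:ℕ) - W = i) := by
            rw [Fin.ext_iff]; simp only [Fin.val_mk]; omega
          have hcy₂ : (y = (⟨W + i + 1, hy₂q⟩ : Fin q)) ↔ ((y:ℕ) - W = i + 1) := by
            rw [Fin.ext_iff]; simp only [Fin.val_mk]; omega
          rw [if_congr hcy₁ rfl rfl, if_congr hcy₂ rfl rfl]
          by_cases h1 : (y:ℕ) - W = i
          · rw [if_pos (by omega : (x:ℕ) - c₁*e₁ = (y:ℕ) - W), if_pos h1,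
              if_neg (by omega : ¬ ((y:ℕ) - W = (x:ℕ) - c₁*e₁ + 1)),
              if_neg (by omega : ¬ ((y:ℕ) - W = i + 1)), h1]
            simp
          · by_cases h2 : (y:ℕ) - W = i + 1
            · rw [if_neg (by omega : ¬ ((x:ℕ) - c₁*e₁ = (y:ℕ) - W)), if_neg h1,
                if_pos (by omega : (y:ℕ) - W = (x:ℕ) - c₁*e₁ + 1), if_pos h2, h2]
              simp
            · rw [if_neg (by omega : ¬ ((x:ℕ) - c₁*e₁ = (y:ℕ) - W)), if_neg h1,
                if_neg (by omega : ¬ ((y:ℕ) - W = (x:ℕ) - c₁*e₁ + 1)), if_neg h2]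
              simp
        · rw [if_neg hy, mul_zero,
            if_neg (fun hh : y = (⟨W + i, hy₁q⟩ : Fin q) => hy (by
              rw [hh]; exact ⟨by simp only [Fin.val_mk]; omega, by simp only [Fin.val_mk]; omega⟩)),
            if_neg (fun hh : y = (⟨W + i + 1, hy₂q⟩ : Fin q) => hy (by
              rw [hh]; exact ⟨by simp only [Fin.val_mk]; omega, by simp only [Fin.val_mk]; omega⟩))]
          simp
      rw [Finset.sum_congr rfl (fun y _ => hterm y), Finset.sum_add_distrib,
        Finset.sum_ite_eq' Finset.univ, Finset.sum_ite_eq' Finset.univ]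
      simp only [Finset.mem_univ, if_true]
      rw [pow_succ]
      ring
    · -- row outside the chosen block: every summand vanishes
      refine Finset.sum_eq_zero (fun y _ => ?_)
      by_cases hy : W ≤ (y:ℕ) ∧ (y:ℕ) < W + (e₂+1)
      · have hy1 : off γf c₁ ≤ (y:ℕ) := by rw [hoffγ]; exact hy.1
        have hy2 : (y:ℕ) < off γf c₁ + γf c₁ := by rw [hoffγ, hγc₁]; exact hy.2
        have hxc : ¬ (off ρf c₁ ≤ (x:ℕ) ∧ (x:ℕ) < off ρf c₁ + ρf c₁) := by
          rw [hoffρ, hρc₁]; exact hx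
        have hA := dsum_apply_block ρf γf (fun _ i j => if i = j then (1:ℂ) else 0)
          hBN x y hy1 hy2
        have hB := dsum_apply_block ρf γf
          (fun b i j => if b < c₁ + c₂ then (if j = i+1 then (1:ℂ) else 0)
            else (if i = j+1 then 1 else 0)) hBN x y hy1 hy2
        rw [if_neg hxc] at hA hB
        show (Polynomial.C ((genPencil c₁ c₂ c₃ c₄ e₁ e₂ f₁ f₂ p q).1 x y) * Polynomial.X
            + Polynomial.C ((genPencil c₁ c₂ c₃ c₄ e₁ e₂ f₁ f₂ p q).2 x y)) * _ = 0
        rw [hGA y, hGB y, hA, hB]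
        simp
      · rw [if_neg hy, mul_zero]

lemma penPoly_eq {p q : ℕ} (L : Pencil p q) :
    penPoly L = (Polynomial.X : Polynomial ℂ) • (L.1.map Polynomial.C) + L.2.map Polynomial.C := by
  funext x y
  show Polynomial.C (L.1 x y) * Polynomial.X + Polynomial.C (L.2 x y) = _
  rw [Matrix.add_apply, Matrix.smul_apply, Matrix.map_apply, Matrix.map_apply,
    smul_eq_mul, mul_comm Polynomial.X]

lemma strictEquiv_null_transfer {p q : ℕ} {L M : Pencil p q} (h : StrictEquiv L M)
    {v : Fin q → Polynomial ℂ} (hvnull : penPoly M *ᵥ v = 0) (hv0 : v ≠ 0)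
    {D : ℕ} (hdeg : ∀ y, (v y).degree < (D : WithBot ℕ)) :
    ∃ w : Fin q → Polynomial ℂ, w ≠ 0 ∧ (∀ y, (w y).degree < (D : WithBot ℕ)) ∧
      penPoly L *ᵥ w = 0 := by
  obtain ⟨Q, R, hQ, hR, h1, h2⟩ := h
  have hQd : IsUnit Q.det := (Matrix.isUnit_iff_isUnit_det Q).mp hQ
  have hRd : IsUnit R.det := (Matrix.isUnit_iff_isUnit_det R).mp hR
  have key : penPoly M = (Q⁻¹.map Polynomial.C) * penPoly L * (R.map Polynomial.C) := by
    rw [penPoly_eq, penPoly_eq, ← h1, ← h2]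
    simp only [Matrix.map_mul, Matrix.mul_add, Matrix.add_mul, Matrix.mul_smul,
      Matrix.smul_mul]
  have h3 : penPoly L * (R.map Polynomial.C) = (Q.map Polynomial.C) * penPoly M := by
    rw [key, ← Matrix.mul_assoc, ← Matrix.mul_assoc, ← Matrix.map_mul,
      Matrix.mul_nonsing_inv Q hQd, Matrix.map_one Polynomial.C (map_zero _) (map_one _),
      Matrix.one_mul]
  refine ⟨(R.map Polynomial.C) *ᵥ v, ?_, ?_, ?_⟩
  · intro hw0
    apply hv0
    have hinv : (R⁻¹.map Polynomial.C) *ᵥ ((R.map Polynomial.C) *ᵥ v) = v := by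
      rw [Matrix.mulVec_mulVec, ← Matrix.map_mul, Matrix.nonsing_inv_mul R hRd,
        Matrix.map_one Polynomial.C (map_zero _) (map_one _), Matrix.one_mulVec]
    rw [← hinv, hw0, Matrix.mulVec_zero]
  · intro x
    have hwx : ((R.map Polynomial.C) *ᵥ v) x = ∑ y, Polynomial.C (R x y) * v y := by
      simp [Matrix.mulVec, dotProduct, Matrix.map_apply]
    rw [hwx]
    refine lt_of_le_of_lt (Polynomial.degree_sum_le _ _) ?_
    rw [Finset.sup_lt_iff (WithBot.bot_lt_coe _)]
    intro y _
    refine lt_of_le_of_lt ?_ (hdeg y)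
    calc (Polynomial.C (R x y) * v y).degree
        ≤ (Polynomial.C (R x y)).degree + (v y).degree := Polynomial.degree_mul_le _ _
      _ ≤ 0 + (v y).degree := add_le_add Polynomial.degree_C_le le_rfl
      _ = (v y).degree := zero_add _
  · rw [Matrix.mulVec_mulVec, h3, ← Matrix.mulVec_mulVec, hvnull, Matrix.mulVec_zero]

lemma comp_rel (m n d : ℕ) (M : Pol d m n) {v : Fin (n*d) → Polynomial ℂ}
    (hnull : penPoly (comp m n d M) *ᵥ v = 0) {c : ℕ} (hc : c < n*(d-1))
    (h1 : c < n*d) (h2 : c + n < n*d) :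
    v ⟨c, h1⟩ = Polynomial.X * v ⟨c + n, h2⟩ := by
  have hn : 0 < n := by
    rcases Nat.eq_zero_or_pos n with h | h
    · subst h; rw [zero_mul] at hc; exact absurd hc (Nat.not_lt_zero c)
    · exact h
  have hxlt : m + c < m + n*(d-1) := by omega
  have hx := congrFun hnull ⟨m + c, hxlt⟩
  simp only [Matrix.mulVec, dotProduct, Pi.zero_apply] at hx
  have hterm : ∀ y : Fin (n*d),
      penPoly (comp m n d M) ⟨m + c, hxlt⟩ y * v y
      = (if y = (⟨c + n, h2⟩ : Fin (n*d)) then Polynomial.X * v y else 0)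
        + (if y = (⟨c, h1⟩ : Fin (n*d)) then -(v y) else 0) := by
    intro y
    have hA : compA m n d M ⟨m + c, hxlt⟩ y
        = if y = (⟨c + n, h2⟩ : Fin (n*d)) then 1 else 0 := by
      unfold compA
      rw [dif_neg (by simp only [Fin.val_mk]; omega : ¬ ((⟨m + c, hxlt⟩ : Fin (m + n*(d-1))) : ℕ) < m)]
      refine if_congr ?_ rfl rfl
      rw [Fin.ext_iff]
      simp only [Fin.val_mk]
      constructor
      · rintro ⟨ha, hb⟩; omega
      · intro hy; constructor <;> omega
    have hB : compB m n d M ⟨m + c, hxlt⟩ y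
        = if y = (⟨c, h1⟩ : Fin (n*d)) then -1 else 0 := by
      unfold compB
      rw [dif_neg (by simp only [Fin.val_mk]; omega : ¬ ((⟨m + c, hxlt⟩ : Fin (m + n*(d-1))) : ℕ) < m)]
      refine if_congr ?_ rfl rfl
      rw [Fin.ext_iff]
      simp only [Fin.val_mk]
      omega
    show (Polynomial.C (compA m n d M ⟨m + c, hxlt⟩ y) * Polynomial.X
        + Polynomial.C (compB m n d M ⟨m + c, hxlt⟩ y)) * v y = _
    rw [hA, hB]
    have hjk : (⟨c + n, h2⟩ : Fin (n*d)) ≠ (⟨c, h1⟩ : Fin (n*d)) := by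
      rw [Ne, Fin.ext_iff]; simp only [Fin.val_mk]; omega
    by_cases hyj : y = (⟨c + n, h2⟩ : Fin (n*d))
    · rw [if_pos hyj, if_pos hyj, if_neg (hyj ▸ hjk), if_neg (hyj ▸ hjk)]
      simp
    · rw [if_neg hyj, if_neg hyj]
      by_cases hyk : y = (⟨c, h1⟩ : Fin (n*d))
      · rw [if_pos hyk, if_pos hyk]
        simp
      · rw [if_neg hyk, if_neg hyk]
        simp
  rw [Finset.sum_congr rfl (fun y _ => hterm y), Finset.sum_add_distrib,
    Finset.sum_ite_eq' Finset.univ, Finset.sum_ite_eq' Finset.univ] at hx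
  simp only [Finset.mem_univ, if_true] at hx
  linear_combination -hx

lemma comp_chain (m n d : ℕ) (M : Pol d m n) {v : Fin (n*d) → Polynomial ℂ}
    (hnull : penPoly (comp m n d M) *ᵥ v = 0) :
    ∀ t c (h : c + n*t < n*d),
      v ⟨c, by omega⟩ = Polynomial.X^t * v ⟨c + n*t, h⟩ := by
  intro t
  induction t with
  | zero =>
    intro c h
    have h00 : n * 0 = 0 := mul_zero n
    simp only [pow_zero, one_mul]
    exact congrArg v (Fin.ext (by simp only [Fin.val_mk]; omega))
  | succ t ih =>
    intro c h
    have hmul : n*(t+1) = n*t + n := by ring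
    have hnd : d = 0 ∨ n*d = n*(d-1) + n := by
      rcases Nat.eq_zero_or_pos d with hd0 | hd0
      · exact Or.inl hd0
      · right
        have hh : d - 1 + 1 = d := by omega
        calc n*d = n*(d-1+1) := by rw [hh]
          _ = n*(d-1) + n := by ring
    have hd0 : d ≠ 0 := by
      intro hdd
      subst hdd
      rw [mul_zero] at h
      omega
    have hnd' : n*d = n*(d-1) + n := hnd.resolve_left hd0
    have hcnd : c < n*(d-1) := by omega
    have h2 : c + n < n*d := by omega
    have step := comp_rel m n d M hnull hcnd (by omega) h2
    rw [step]
    have ihh := ih (c + n) (by omega)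
    rw [ihh, ← mul_assoc, ← pow_succ']
    exact congrArg _ (congrArg v (Fin.ext (by simp only [Fin.val_mk]; omega)))

lemma comp_last_zero (m n d : ℕ) (M : Pol d m n) {v : Fin (n*d) → Polynomial ℂ}
    (hnull : penPoly (comp m n d M) *ᵥ v = 0)
    (hdeg : ∀ y, (v y).degree < ((d-1 : ℕ) : WithBot ℕ))
    (j : Fin (n*d)) (hj : n*(d-1) ≤ (j:ℕ)) : v j = 0 := by
  have hjlt := j.isLt
  have h : ((j:ℕ) - n*(d-1)) + n*(d-1) < n*d := by omega
  have hchain := comp_chain m n d M hnull (d-1) ((j:ℕ) - n*(d-1)) h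
  have hje : (⟨(j:ℕ) - n*(d-1) + n*(d-1), h⟩ : Fin (n*d)) = j := Fin.ext (by
    simp only [Fin.val_mk]; omega)
  rw [hje] at hchain
  by_contra hvj
  have hd1 := hdeg ⟨(j:ℕ) - n*(d-1), by omega⟩
  rw [hchain, Polynomial.degree_mul, Polynomial.degree_X_pow] at hd1
  have h0 : 0 ≤ (v j).degree := Polynomial.zero_le_degree_iff.mpr hvj
  have hge : ((d-1 : ℕ) : WithBot ℕ) ≤ ((d-1:ℕ) : WithBot ℕ) + (v j).degree :=
    le_add_of_nonneg_right h0
  exact absurd hd1 (not_lt.mpr hge)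

lemma comp_no_null (m n d : ℕ) (hd : 1 ≤ d) (M : Pol d m n)
    {v : Fin (n*d) → Polynomial ℂ}
    (hnull : penPoly (comp m n d M) *ᵥ v = 0)
    (hdeg : ∀ y, (v y).degree < ((d-1 : ℕ) : WithBot ℕ)) : v = 0 := by
  have hnd : n*d = n*(d-1) + n := by
    have hh : d - 1 + 1 = d := by omega
    calc n*d = n*(d-1+1) := by rw [hh]
      _ = n*(d-1) + n := by ring
  have key : ∀ t (j : Fin (n*d)), n*d ≤ (j:ℕ) + n*t + n → v j = 0 := by
    intro t
    induction t with
    | zero =>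
      intro j hj
      have h00 : n * 0 = 0 := mul_zero n
      exact comp_last_zero m n d M hnull hdeg j (by omega)
    | succ t ih =>
      intro j hj
      by_cases hcase : n*(d-1) ≤ (j:ℕ)
      · exact comp_last_zero m n d M hnull hdeg j hcase
      · push_neg at hcase
        have h2 : (j:ℕ) + n < n*d := by omega
        have step := comp_rel m n d M hnull hcase j.isLt h2
        have hj' : (⟨(j:ℕ), j.isLt⟩ : Fin (n*d)) = j := Fin.ext rfl
        rw [hj'] at step
        have hmul : n*(t+1) = n*t + n := by ring
        have hz := ih ⟨(j:ℕ)+n, h2⟩ (show n*d ≤ (j:ℕ) + n + n*t + n by omega)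
        rw [hz, mul_zero] at step
        exact step
  funext j
  exact key d j (by have := j.isLt; omega)

/-- For `a₁ < (n−r)(d−1)`, the generic pencil `K_{a₁}` of size
`m₁ × n₁` and rank `r₁` is not strictly equivalent to the first companion form of any
`m × n` polynomial of grade `d`. -/
theorem no_companion_strictEquiv_Kp (m n d r a₁ : ℕ) (hm : 2 ≤ m) (hn : 2 ≤ n)
    (hd : 1 ≤ d) (hr1 : 1 ≤ r) (hr2 : r ≤ min m n - 1)
    (ha₁ : a₁ < (n - r) * (d - 1)) :
    ¬ ∃ M : Pol d m n,
        StrictEquiv (comp m n d M) (Kp (m + n*(d-1)) (n*d) (r + n*(d-1)) a₁) := by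
  rintro ⟨M, hSE⟩
  have hpos : 0 < (n - r) * (d - 1) := lt_of_le_of_lt (Nat.zero_le a₁) ha₁
  have hnr : 0 < n - r := by
    rcases Nat.eq_zero_or_pos (n - r) with h | h
    · rw [h, zero_mul] at hpos; exact absurd hpos (lt_irrefl 0)
    · exact h
  have hd1 : 0 < d - 1 := by
    rcases Nat.eq_zero_or_pos (d - 1) with h | h
    · rw [h, mul_zero] at hpos; exact absurd hpos (lt_irrefl 0)
    · exact h
  have hnd : n*d = n*(d-1) + n := by
    have hh : d - 1 + 1 = d := by omega
    calc n*d = n*(d-1+1) := by rw [hh]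
      _ = n*(d-1) + n := by ring
  have hqρ : n*d - (r + n*(d-1)) = n - r := by omega
  have hs : a₁ % (n-r) < n - r := Nat.mod_lt _ hnr
  have hα : a₁ / (n-r) < d - 1 := Nat.div_lt_of_lt_mul ha₁
  have hfit : (a₁ % (n-r)) * ((a₁/(n-r)+1)+1) + ((a₁/(n-r))+1) ≤ n*d := by
    have e1 : (a₁ % (n-r) + 1) * ((a₁/(n-r)+1)+1)
        = (a₁ % (n-r)) * ((a₁/(n-r)+1)+1) + ((a₁/(n-r)+1)+1) := by ring
    have h2 : (a₁ % (n-r) + 1) * ((a₁/(n-r)+1)+1) ≤ (n-r) * d :=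
      Nat.mul_le_mul (by omega) (by omega)
    have h3 : (n-r) * d ≤ n * d := Nat.mul_le_mul_right d (Nat.sub_le n r)
    omega
  have hc₂ : 1 ≤ n - r - a₁ % (n-r) := by omega
  obtain ⟨v, hv0, hvdeg, hvnull⟩ := genPencil_null (a₁ % (n-r)) (n-r - a₁ % (n-r))
    (((r + n*(d-1)) - a₁) % ((m + n*(d-1)) - (r + n*(d-1))))
    ((m + n*(d-1)) - (r + n*(d-1)) - ((r + n*(d-1)) - a₁) % ((m + n*(d-1)) - (r + n*(d-1))))
    (a₁/(n-r) + 1) (a₁/(n-r))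
    (((r + n*(d-1)) - a₁) / ((m + n*(d-1)) - (r + n*(d-1))) + 1)
    (((r + n*(d-1)) - a₁) / ((m + n*(d-1)) - (r + n*(d-1))))
    (m + n*(d-1)) (n*d) hc₂ hfit
  have hKp : Kp (m + n*(d-1)) (n*d) (r + n*(d-1)) a₁
      = genPencil (a₁ % (n-r)) (n-r - a₁ % (n-r))
          (((r + n*(d-1)) - a₁) % ((m + n*(d-1)) - (r + n*(d-1))))
          ((m + n*(d-1)) - (r + n*(d-1)) - ((r + n*(d-1)) - a₁) % ((m + n*(d-1)) - (r + n*(d-1))))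
          (a₁/(n-r) + 1) (a₁/(n-r))
          (((r + n*(d-1)) - a₁) / ((m + n*(d-1)) - (r + n*(d-1))) + 1)
          (((r + n*(d-1)) - a₁) / ((m + n*(d-1)) - (r + n*(d-1))))
          (m + n*(d-1)) (n*d) := by
    unfold Kp
    rw [hqρ]
  have hdlt : ∀ y, (v y).degree < ((d-1 : ℕ) : WithBot ℕ) := fun y =>
    lt_of_le_of_lt (hvdeg y) (by exact_mod_cast hα)
  rw [hKp] at hSE
  obtain ⟨w, hw0, hwdeg, hwnull⟩ := strictEquiv_null_transfer hSE hvnull hv0 hdlt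
  exact hw0 (comp_no_null m n d hd M hwnull hwdeg)

end MPoly
end
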